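/- arXiv:1212.3036 — 4 statements merged into one kernel-verified Lean document; each statement's English description precedes it below -/
import Mathlib

section
/- Every finite simple graph G containing no three pairwise nonadjacent vertices (i.e., with independence number α(G) ≤ 2) satisfies χ(G) ≤ γ_ℓ(G). -/
/-!
The complement `H = Gᶜ` is triangle-free, and every colour class of `G` is a single vertex or a
non-edge of `G`; so a matching of `H` with `μ` edges gives a colouring of `G` with `n - μ`
colours. With `t = γ_ℓ(G)` it therefore suffices to find a perfect matching in `H` joined with
`d = 2t - n` universal vertices. If there is none, Tutte's theorem and a parity count give a set
`S` such that `H - S` has at least `|S| + d + 2` components. Let `v` be a vertex of minimum degree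
outside `S`. The neighbourhood outside `S` of a neighbour of `v` is independent, as `H` is
triangle-free; together with one vertex of every other component it is an independent set of `H`,
i.e. a clique of `G`, through `v`, and it is large enough to force `γ_ℓ(v) > t`.
-/


open SimpleGraph

namespace Paper

variable {V : Type*} {W : Type*}

/-- A graph is claw-free if no vertex has three pairwise nonadjacent neighbours. -/
def ClawFree (G : SimpleGraph V) : Prop :=
  ¬ ∃ (v a b c : V), G.Adj v a ∧ G.Adj v b ∧ G.Adj v c ∧
      ¬G.Adj a b ∧ ¬G.Adj a c ∧ ¬G.Adj b c ∧ a ≠ b ∧ a ≠ c ∧ b ≠ c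

/-- A graph is quasi-line if every neighbourhood is covered by two cliques. -/
def QuasiLine (G : SimpleGraph V) : Prop :=
  ∀ v : V, ∃ S T : Set V, G.IsClique S ∧ G.IsClique T ∧ G.neighborSet v ⊆ S ∪ T

/-- The clique number ω(G). -/
noncomputable def cliqueNum (G : SimpleGraph V) : ℕ :=
  sSup {n | ∃ s : Finset V, G.IsNClique n s}

/-- The clique number of the subgraph induced on a vertex set `S`. -/
noncomputable def cliqueNumOn (G : SimpleGraph V) (S : Set V) : ℕ :=
  sSup {n | ∃ s : Finset V, ↑s ⊆ S ∧ G.IsNClique n s}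

/-- ω(v): the maximum size of a clique containing `v`. -/
noncomputable def omegaAt (G : SimpleGraph V) (v : V) : ℕ :=
  sSup {n | ∃ s : Finset V, G.IsNClique n s ∧ v ∈ s}

/-- The degree of a vertex (as the cardinality of its neighbourhood). -/
noncomputable def degree' (G : SimpleGraph V) (v : V) : ℕ := (G.neighborSet v).ncard

/-- The maximum degree Δ(G). -/
noncomputable def maxDeg (G : SimpleGraph V) : ℕ := sSup {n | ∃ v : V, n = degree' G v}

/-- γ_ℓ(v) = ⌈(d(v)+1+ω(v))/2⌉. -/
noncomputable def gammaLocalAt (G : SimpleGraph V) (v : V) : ℕ :=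
  (degree' G v + 1 + omegaAt G v + 1) / 2

/-- γ_ℓ(G) = max over vertices of γ_ℓ(v). -/
noncomputable def gammaLocal (G : SimpleGraph V) : ℕ :=
  sSup {n | ∃ v : V, n = gammaLocalAt G v}

/-- The closed neighbourhood of a vertex. -/
def closedNbhd (G : SimpleGraph V) (v : V) : Set V := insert v (G.neighborSet v)

/-- The closed neighbourhood within an induced subgraph on `S`. -/
def closedNbhdOn (G : SimpleGraph V) (S : Set V) (v : V) : Set V := S ∩ closedNbhd G v

/-- A triad: three pairwise nonadjacent vertices. -/
def IsTriad (G : SimpleGraph V) (T : Finset V) : Prop :=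
  T.card = 3 ∧ ∀ u ∈ T, ∀ w ∈ T, u ≠ w → ¬G.Adj u w

/-- A good triad within the induced subgraph on `S`: every vertex of the induced subgraph
outside `T` has two neighbours in `T`, or a twin in `T`, or is trumped by a vertex of `T`. -/
def GoodTriadOn (G : SimpleGraph V) (S : Set V) (T : Finset V) : Prop :=
  ↑T ⊆ S ∧ IsTriad G T ∧
    ∀ v ∈ S, v ∉ T →
      (∃ t1 ∈ T, ∃ t2 ∈ T, t1 ≠ t2 ∧ G.Adj v t1 ∧ G.Adj v t2) ∨
      (∃ t ∈ T, closedNbhdOn G S v = closedNbhdOn G S t) ∨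
      (∃ t ∈ T, closedNbhdOn G S v ⊂ closedNbhdOn G S t)

/-- A good triad in `G`. -/
def GoodTriad (G : SimpleGraph V) (T : Finset V) : Prop := GoodTriadOn G Set.univ T

/-- A homogeneous pair of cliques within the induced subgraph on `S`. -/
def IsHomPairOn (G : SimpleGraph V) (S : Set V) (A B : Finset V) : Prop :=
  ↑A ⊆ S ∧ ↑B ⊆ S ∧ G.IsClique (↑A : Set V) ∧ G.IsClique (↑B : Set V) ∧
    A.Nonempty ∧ B.Nonempty ∧ Disjoint A B ∧ 3 ≤ A.card + B.card ∧
    ∀ v ∈ S, v ∉ A → v ∉ B →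
      ((∀ a ∈ A, G.Adj v a) ∨ (∀ a ∈ A, ¬G.Adj v a)) ∧
      ((∀ b ∈ B, G.Adj v b) ∨ (∀ b ∈ B, ¬G.Adj v b))

/-- A homogeneous pair of cliques in `G`. -/
def IsHomPair (G : SimpleGraph V) (A B : Finset V) : Prop := IsHomPairOn G Set.univ A B

/-- A homogeneous pair of cliques `(A,B)` is skeletal if deleting any single edge
between `A` and `B` strictly decreases the clique number of `G[A ∪ B]`. -/
def IsSkeletalPair (G : SimpleGraph V) (A B : Finset V) : Prop :=
  ∀ a ∈ A, ∀ b ∈ B, G.Adj a b →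
    cliqueNumOn (G.deleteEdges {s(a, b)}) (↑A ∪ ↑B) < cliqueNumOn G (↑A ∪ ↑B)

/-- A graph is skeletal if every homogeneous pair of cliques in it is skeletal. -/
def Skeletal (G : SimpleGraph V) : Prop :=
  ∀ A B : Finset V, IsHomPair G A B → IsSkeletalPair G A B

/-- A linear pair: no induced C₄ between `A` and `B`. -/
def IsLinearPair (G : SimpleGraph V) (A B : Finset V) : Prop :=
  ¬ ∃ a1 ∈ A, ∃ a2 ∈ A, ∃ b1 ∈ B, ∃ b2 ∈ B,
      G.Adj a1 b1 ∧ G.Adj a2 b2 ∧ ¬G.Adj a1 b2 ∧ ¬G.Adj a2 b1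

/-- A homogeneous clique. -/
def IsHomogeneousClique [Fintype V] (G : SimpleGraph V) (C : Finset V) : Prop :=
  G.IsClique (↑C : Set V) ∧ 2 ≤ C.card ∧ C.card ≤ Fintype.card V - 1 ∧
    ∀ v ∉ C, (∀ c ∈ C, G.Adj v c) ∨ (∀ c ∈ C, ¬G.Adj v c)

/-- `X` straddles the three-cliquing `(A,B,C)` if it meets more than one of `A`, `B`, `C`. -/
def Straddles (A B C : Set V) (X : Finset V) : Prop :=
  ((↑X ∩ A).Nonempty ∧ (↑X ∩ B).Nonempty) ∨
  ((↑X ∩ A).Nonempty ∧ (↑X ∩ C).Nonempty) ∨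
  ((↑X ∩ B).Nonempty ∧ (↑X ∩ C).Nonempty)

/-- A three-cliqued graph is weakly skeletal if every nonskeletal homogeneous pair
of cliques is straddling. -/
def WeaklySkeletal (G : SimpleGraph V) (A B C : Set V) : Prop :=
  ∀ X Y : Finset V, IsHomPair G X Y → ¬IsSkeletalPair G X Y →
    Straddles A B C X ∨ Straddles A B C Y

/-- A set of unordered pairs forming a matching (pairwise disjoint non-loop pairs). -/
def IsMatchingSet (M : Set (Sym2 W)) : Prop :=
  (∀ e ∈ M, ¬e.IsDiag) ∧ ∀ e ∈ M, ∀ e' ∈ M, e ≠ e' → ∀ w : W, w ∈ e → w ∉ e'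

/-- `G[D]` is a thickening of `H[R]` under the matching `M`, via the fiber map `f`. -/
structure IsThickeningBetween (H : SimpleGraph W) (M : Set (Sym2 W)) (R : Set W)
    (G : SimpleGraph V) (D : Set V) (f : V → W) : Prop where
  maps_into : ∀ v ∈ D, f v ∈ R
  fibers_nonempty : ∀ w ∈ R, ∃ v ∈ D, f v = w
  fibers_clique : ∀ w : W, G.IsClique {v | v ∈ D ∧ f v = w}
  adj_of_adj : ∀ u ∈ D, ∀ v ∈ D, f u ≠ f v → H.Adj (f u) (f v) → s(f u, f v) ∉ M → G.Adj u v
  nonadj_of_nonadj : ∀ u ∈ D, ∀ v ∈ D, f u ≠ f v → ¬H.Adj (f u) (f v) → ¬G.Adj u v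
  semi_adj : ∀ x ∈ R, ∀ y ∈ R, s(x, y) ∈ M →
    ∃ u ∈ D, ∃ v ∈ D, f u = x ∧ f v = y ∧ G.Adj u v
  semi_nonadj : ∀ x ∈ R, ∀ y ∈ R, s(x, y) ∈ M →
    ∃ u ∈ D, ∃ v ∈ D, f u = x ∧ f v = y ∧ ¬G.Adj u v

/-- `G` is a thickening of `H[R]` under `M`. -/
def IsThickeningOn (H : SimpleGraph W) (M : Set (Sym2 W)) (R : Set W)
    (G : SimpleGraph V) (f : V → W) : Prop :=
  IsThickeningBetween H M R G Set.univ f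

/-- `G` is a thickening of `H` under `M`. -/
def IsThickening (H : SimpleGraph W) (M : Set (Sym2 W)) (G : SimpleGraph V) (f : V → W) : Prop :=
  IsThickeningBetween H M Set.univ G Set.univ f

/-- A graph is antiprismatic if every vertex outside a triad has exactly two
neighbours in it. -/
def Antiprismatic (H : SimpleGraph W) : Prop :=
  ∀ T : Finset W, IsTriad H T → ∀ v ∉ T,
    ∃ t ∈ T, ¬H.Adj v t ∧ ∀ t' ∈ T, t' ≠ t → H.Adj v t'

/-- A changeable matching in an antiprismatic graph. -/
def ChangeableMatching (H : SimpleGraph W) (M : Set (Sym2 W)) : Prop :=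
  M ⊆ H.edgeSet ∧ IsMatchingSet M ∧ ∀ M' ⊆ M, Antiprismatic (H.deleteEdges M')



/-- The icosahedron `G0` on vertices `v0, …, v11`. -/
def icoG0 : SimpleGraph (Fin 12) :=
  SimpleGraph.fromRel (fun i j =>
    (1 ≤ i.val ∧ i.val ≤ 10 ∧ (j.val = i.val % 10 + 1 ∨ j.val = (i.val + 1) % 10 + 1)) ∨
    (i.val = 0 ∧ j.val % 2 = 1 ∧ 1 ≤ j.val ∧ j.val ≤ 10) ∨
    (i.val = 11 ∧ j.val % 2 = 0 ∧ 1 ≤ j.val ∧ j.val ≤ 10))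

/-- `G1 = G0 − v11`. -/
def icoG1 : SimpleGraph (Fin 11) :=
  SimpleGraph.fromRel (fun i j =>
    (1 ≤ i.val ∧ (j.val = i.val % 10 + 1 ∨ j.val = (i.val + 1) % 10 + 1)) ∨
    (i.val = 0 ∧ j.val % 2 = 1))

/-- `G2 = G1 − v10`. -/
def icoG2 : SimpleGraph (Fin 10) :=
  SimpleGraph.fromRel (fun i j =>
    (1 ≤ i.val ∧ (j.val = i.val % 10 + 1 ∨ j.val = (i.val + 1) % 10 + 1)) ∨
    (i.val = 0 ∧ j.val % 2 = 1))

/-- An icosahedral thickening: a proper thickening of `G0` or `G1`, or a thickening of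
`G2 ∪ M` under a matching `M ⊆ {v1v4, v6v9}`. -/
def IsIcosahedralThickening (G : SimpleGraph V) : Prop :=
  (∃ f : V → Fin 12, IsThickening icoG0 ∅ G f) ∨
  (∃ f : V → Fin 11, IsThickening icoG1 ∅ G f) ∨
  (∃ (M : Set (Sym2 (Fin 10))) (f : V → Fin 10),
      M ⊆ {s((1 : Fin 10), 4), s(6, 9)} ∧
      IsThickening (icoG2 ⊔ SimpleGraph.fromEdgeSet M) M G f)

/-! ### Antihat graphs -/

/-- The vertex type of the antihat base graph: `A = {a0,…,ak}`, `B = {b0,…,bk}`,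
`C = {c1,…,ck}` (the third component `i` encodes `c_{i+1}`). -/
abbrev AHV (k : ℕ) : Type := Fin (k + 1) ⊕ Fin (k + 1) ⊕ Fin k

def ahA {k : ℕ} (i : Fin (k + 1)) : AHV k := Sum.inl i
def ahB {k : ℕ} (i : Fin (k + 1)) : AHV k := Sum.inr (Sum.inl i)
def ahC {k : ℕ} (i : Fin k) : AHV k := Sum.inr (Sum.inr i)

/-- The antihat base graph `H`, where `e00` records whether `a0` and `b0` are adjacent. -/
def antihatH (k : ℕ) (e00 : Bool) : SimpleGraph (AHV k) :=
  SimpleGraph.fromRel (fun x y =>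
    match x, y with
    | Sum.inl _, Sum.inl _ => True
    | Sum.inr (Sum.inl _), Sum.inr (Sum.inl _) => True
    | Sum.inr (Sum.inr _), Sum.inr (Sum.inr _) => True
    | Sum.inl i, Sum.inr (Sum.inl j) =>
        (i = j ∧ 1 ≤ i.val) ∨ (i.val = 0 ∧ j.val = 0 ∧ e00 = true)
    | Sum.inl i, Sum.inr (Sum.inr j) => 1 ≤ i.val ∧ i.val ≠ j.val + 1
    | Sum.inr (Sum.inl i), Sum.inr (Sum.inr j) => 1 ≤ i.val ∧ i.val ≠ j.val + 1
    | _, _ => False)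

/-- The conditions on the matching `M` of an antihat thickening with deleted set `Xd`. -/
def AntihatM (k : ℕ) (e00 : Bool) (Xd : Finset (AHV k)) (M : Set (Sym2 (AHV k))) : Prop :=
  IsMatchingSet M ∧
  (∀ e ∈ M, ∀ w : AHV k, w ∈ e → w ∉ Xd) ∧
  (∀ i j : Fin (k + 1), s(ahA i, ahA j) ∉ M) ∧
  (∀ i j : Fin (k + 1), s(ahB i, ahB j) ∉ M) ∧
  (∀ i j : Fin k, s(ahC i, ahC j) ∉ M) ∧
  (e00 = true → s(ahA (0 : Fin (k + 1)), ahB (0 : Fin (k + 1))) ∈ M) ∧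
  (∀ i j : Fin (k + 1), 1 ≤ i.val → 1 ≤ j.val → s(ahA i, ahB j) ∈ M →
      i = j ∧ ∃ c : Fin k, c.val + 1 = i.val ∧ ahC c ∈ Xd) ∧
  (∀ i : Fin (k + 1), ∀ j : Fin k, 1 ≤ i.val → s(ahB i, ahC j) ∈ M →
      i.val = j.val + 1 ∧ ahA i ∈ Xd) ∧
  (∀ i : Fin (k + 1), ∀ j : Fin k, 1 ≤ i.val → s(ahA i, ahC j) ∈ M →
      i.val = j.val + 1 ∧ ahB i ∈ Xd)

/-! ### Strips and generalized 2-joins -/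

/-- The induced subgraph on `S` contains an induced `W5` (a 5-wheel). -/
def HasInducedW5On (G : SimpleGraph V) (S : Set V) : Prop :=
  ∃ w c0 c1 c2 c3 c4 : V,
    w ∈ S ∧ c0 ∈ S ∧ c1 ∈ S ∧ c2 ∈ S ∧ c3 ∈ S ∧ c4 ∈ S ∧
    G.Adj w c0 ∧ G.Adj w c1 ∧ G.Adj w c2 ∧ G.Adj w c3 ∧ G.Adj w c4 ∧
    G.Adj c0 c1 ∧ G.Adj c1 c2 ∧ G.Adj c2 c3 ∧ G.Adj c3 c4 ∧ G.Adj c4 c0 ∧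
    c0 ≠ c2 ∧ c0 ≠ c3 ∧ c1 ≠ c3 ∧ c1 ≠ c4 ∧ c2 ≠ c4 ∧
    ¬G.Adj c0 c2 ∧ ¬G.Adj c0 c3 ∧ ¬G.Adj c1 c3 ∧ ¬G.Adj c1 c4 ∧ ¬G.Adj c2 c4

/-- A generalized 2-join `((X1,Y1),(X2,Y2))` of `G` separating `V1` from `V2`,
with `X1, X2, Y1, Y2` pairwise disjoint except possibly `X1` and `Y1`. -/
structure IsGen2Join [Fintype V] [DecidableEq V] (G : SimpleGraph V)
    (V1 V2 X1 Y1 X2 Y2 : Finset V) : Prop where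
  disjV : Disjoint V1 V2
  unionV : V1 ∪ V2 = Finset.univ
  subX1 : X1 ⊆ V1
  subY1 : Y1 ⊆ V1
  subX2 : X2 ⊆ V2
  subY2 : Y2 ⊆ V2
  cliqueX : G.IsClique (↑X1 ∪ ↑X2 : Set V)
  cliqueY : G.IsClique (↑Y1 ∪ ↑Y2 : Set V)
  cross : ∀ u ∈ V1, ∀ v ∈ V2, G.Adj u v → (u ∈ X1 ∧ v ∈ X2) ∨ (u ∈ Y1 ∧ v ∈ Y2)
  disjX2Y2 : Disjoint X2 Y2

/-- ω'(v): the maximum size of a clique of `H2 = G[V2 ∪ X1 ∪ Y1]` containing `v`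
and not intersecting both `X1 ∖ Y1` and `Y1 ∖ X1`. -/
noncomputable def omegaJ [DecidableEq V] (G : SimpleGraph V) (V2 X1 Y1 : Finset V) (v : V) : ℕ :=
  sSup {n | ∃ s : Finset V, G.IsNClique n s ∧ v ∈ s ∧ s ⊆ V2 ∪ X1 ∪ Y1 ∧
      ¬((∃ x ∈ s, x ∈ X1 ∧ x ∉ Y1) ∧ ∃ y ∈ s, y ∈ Y1 ∧ y ∉ X1)}

/-- γ_ℓ^j(H2) = max over `v ∈ V2 ∪ X1 ∪ Y1` of ⌈(d_G(v)+1+ω'(v))/2⌉. -/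
noncomputable def gammaLJ [DecidableEq V] (G : SimpleGraph V) (V2 X1 Y1 : Finset V) : ℕ :=
  (V2 ∪ X1 ∪ Y1).sup fun v => (degree' G v + 1 + omegaJ G V2 X1 Y1 v + 1) / 2

/-- `(G[V2], X2, Y2)` is an antihat strip. -/
def IsAntihatStripOn (G : SimpleGraph V) (V2 X2 Y2 : Finset V) : Prop :=
  ∃ (k : ℕ) (e00 : Bool) (Xd : Finset (AHV k)) (M : Set (Sym2 (AHV k))) (f : V → AHV k),
    2 ≤ k ∧ ahA (0 : Fin (k + 1)) ∉ Xd ∧ ahB (0 : Fin (k + 1)) ∉ Xd ∧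
    (∃ i j : Fin k, i ≠ j ∧ ahC i ∉ Xd ∧ ahC j ∉ Xd) ∧
    AntihatM k e00 Xd M ∧
    IsThickeningBetween (antihatH k e00 ⊔ SimpleGraph.fromEdgeSet M) M
      ((↑Xd ∪ {ahA (0 : Fin (k + 1)), ahB (0 : Fin (k + 1))} : Set (AHV k))ᶜ)
      G (↑V2 : Set V) f ∧
    (↑X2 : Set V) = {v | v ∈ V2 ∧ ∃ i : Fin (k + 1), 1 ≤ i.val ∧ f v = ahA i ∧ ahA i ∉ Xd} ∧
    (↑Y2 : Set V) = {v | v ∈ V2 ∧ ∃ i : Fin (k + 1), 1 ≤ i.val ∧ f v = ahB i ∧ ahB i ∉ Xd} ∧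
    HasInducedW5On G (↑V2 : Set V)

/-- The base graph of strange strips, on `a1=0, a2=1, b1=2, b2=3, b3=4, c1=5, c2=6`. -/
def strangeH : SimpleGraph (Fin 7) :=
  SimpleGraph.fromEdgeSet
    {s(0, 1), s(2, 3), s(2, 4), s(3, 4), s(5, 6),
     s(0, 2), s(1, 5), s(3, 5), s(4, 5), s(0, 6), s(1, 6), s(2, 6), s(3, 6)}

/-- The matching `{b3c1, b2c2}` of strange strips. -/
def strangeM : Set (Sym2 (Fin 7)) := {s(4, 5), s(3, 6)}

/-- `(G[V2], X2, Y2)` is a strange strip. -/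
def IsStrangeStripOn (G : SimpleGraph V) (V2 X2 Y2 : Finset V) : Prop :=
  ∃ f : V → Fin 7,
    IsThickeningBetween strangeH strangeM Set.univ G (↑V2 : Set V) f ∧
    (↑X2 : Set V) = {v | v ∈ V2 ∧ (f v = 0 ∨ f v = 1)} ∧
    (↑Y2 : Set V) = {v | v ∈ V2 ∧ (f v = 2 ∨ f v = 3 ∨ f v = 4)}

/-- The base graph of gear strips, on `v1, …, v10` (as `0, …, 9`). -/
def gearH : SimpleGraph (Fin 10) :=
  SimpleGraph.fromEdgeSet
    {s(0, 1), s(1, 2), s(2, 3), s(3, 4), s(4, 5), s(0, 5),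
     s(6, 0), s(6, 1), s(6, 2), s(6, 5),
     s(7, 2), s(7, 3), s(7, 4), s(7, 5), s(7, 6),
     s(8, 0), s(8, 2), s(8, 3), s(8, 5), s(8, 6), s(8, 7),
     s(9, 1), s(9, 2), s(9, 4), s(9, 5), s(9, 6), s(9, 7)}

/-- `(G[V2], X2, Y2)` is a gear strip. -/
def IsGearStripOn (G : SimpleGraph V) (V2 X2 Y2 : Finset V) : Prop :=
  ∃ (Xd : Finset (Fin 10)) (M : Set (Sym2 (Fin 10))) (f : V → Fin 10),
    Xd ⊆ {8, 9} ∧ M ⊆ {s((6 : Fin 10), 7)} ∧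
    IsThickeningBetween gearH M ((↑Xd : Set (Fin 10))ᶜ) G (↑V2 : Set V) f ∧
    (↑X2 : Set V) = {v | v ∈ V2 ∧ (f v = 0 ∨ f v = 1)} ∧
    (↑Y2 : Set V) = {v | v ∈ V2 ∧ (f v = 3 ∨ f v = 4)}

/-! ### The two exceptional three-cliqued classes -/

/-- The base graph of Exception I, on `v1, …, v8` (as `0, …, 7`);
`b` records whether `v2v5` is an edge. -/
def exIG (b : Bool) : SimpleGraph (Fin 8) :=
  SimpleGraph.fromEdgeSet
    ({s(0, 1), s(0, 2), s(0, 5), s(0, 6), s(1, 2), s(1, 3), s(2, 3), s(2, 4), s(3, 4),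
      s(3, 5), s(4, 5), s(5, 6), s(6, 7)} ∪ (if b then {s(1, 4)} else ∅))

/-- The matching of Exception I: `{v1v4, v3v6}`, plus `v2v5` when present. -/
def exIM (b : Bool) : Set (Sym2 (Fin 8)) :=
  {s(0, 3), s(2, 5)} ∪ (if b then {s(1, 4)} else ∅)

/-- The base graph of Exception II, on `v1, …, v9` (as `0, …, 8`); `b24` records
whether `v2v4` is an edge and `b75` whether `v7v5` is an edge. -/
def exIIG (b24 b75 : Bool) : SimpleGraph (Fin 9) :=
  SimpleGraph.fromEdgeSet
    ({s(0, 1), s(6, 7),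
      s(2, 3), s(2, 4), s(2, 5), s(2, 8), s(3, 4), s(3, 5), s(3, 8), s(4, 5), s(4, 8), s(5, 8),
      s(0, 2), s(0, 7), s(0, 8), s(5, 7), s(7, 8), s(1, 2), s(5, 6)}
      ∪ (if b24 then {s(1, 3)} else ∅) ∪ (if b75 then {s(4, 6)} else ∅))

/-! ### Circular interval representations -/

/-- Membership in the (closed) arc from `s` to `t` of the circle `[0,1)`,
going in increasing direction and possibly wrapping around. -/
def ArcMem (s t x : ℝ) : Prop := if s ≤ t then s ≤ x ∧ x ≤ t else (s ≤ x ∨ x ≤ t)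

theorem _root_.Set.ncard_preimage_inl_add_ncard_preimage_inr {α β : Type*} [Finite α]
    [Finite β] (s : Set (α ⊕ β)) :
    (Sum.inl ⁻¹' s).ncard + (Sum.inr ⁻¹' s).ncard = s.ncard := by
  conv_rhs => rw [← Set.image_preimage_inl_union_image_preimage_inr s]
  rw [Set.ncard_union_eq (by simp [Set.disjoint_left]),
    Set.ncard_image_of_injective _ Sum.inl_injective,
    Set.ncard_image_of_injective _ Sum.inr_injective]

section

variable {κ : Type*} {G H : SimpleGraph V} {K : SimpleGraph W}

theorem _root_.SimpleGraph.Subgraph.IsMatching.two_mul_card_edgeSet_le [Finite V]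
    {M : G.Subgraph} (hM : M.IsMatching) : 2 * Nat.card M.edgeSet ≤ Nat.card M.verts := by
  classical
  have := Fintype.ofFinite M.verts
  have := Fintype.ofFinite M.edgeSet
  rw [Nat.card_eq_fintype_card, Nat.card_eq_fintype_card, mul_comm]
  by_contra! hlt
  obtain ⟨⟨e, he⟩, hfib⟩ := Fintype.exists_card_fiber_lt_of_card_lt_mul hM.toEdge hlt
  induction e using Sym2.ind with
  | h a b =>
    refine hfib.not_ge <|
      Finset.one_lt_card.2 ⟨⟨a, he.fst_mem⟩, ?_, ⟨b, he.snd_mem⟩, ?_, ?_⟩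
    · simp [hM.toEdge_eq_of_adj he]
    · simp [hM.toEdge_eq_toEdge_of_adj he ▸ hM.toEdge_eq_of_adj he]
    · simpa using he.ne

/-- Two vertices of `H` get the same colour only if their images are matched, hence adjacent. -/
theorem _root_.SimpleGraph.Subgraph.IsMatching.colorable_compl [Finite W] (f : H ↪g K)
    {M : K.Subgraph} (hM : M.IsMatching) (hf : ∀ a, f a ∈ M.verts) :
    Hᶜ.Colorable (Nat.card M.edgeSet) := by
  have := Fintype.ofFinite M.edgeSet
  rw [Nat.card_eq_fintype_card]
  refine (Coloring.mk (fun a => hM.toEdge ⟨f a, hf a⟩) fun {a b} hab heq => ?_).colorable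
  rw [compl_adj] at hab
  obtain ⟨w, hw, -⟩ := hM (hf a)
  have hb := hM.mem_coe_toEdge (hf b)
  rw [← heq, hM.toEdge_eq_of_adj hw, Sym2.mem_iff] at hb
  rcases hb with hb | rfl
  · exact hab.1 (f.injective hb).symm
  · exact hab.2 (f.map_adj_iff.1 hw.adj_sub)

theorem _root_.SimpleGraph.IsTutteViolator.ncard_add_two_le [Finite V] {u : Set V}
    (hV : Even (Nat.card V)) (h : G.IsTutteViolator u) :
    u.ncard + 2 ≤ ((⊤ : G.Subgraph).deleteVerts u).coe.oddComponents.ncard := by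
  have hpar := odd_ncard_oddComponents (G := ((⊤ : G.Subgraph).deleteVerts u).coe)
  have hcard : Nat.card ((⊤ : G.Subgraph).deleteVerts u).verts + u.ncard = Nat.card V := by
    rw [Subgraph.deleteVerts_verts, Subgraph.verts_top, Nat.card_coe_set_eq,
      ← Set.compl_eq_univ_sdiff, add_comm, Set.ncard_add_ncard_compl]
  rw [IsTutteViolator] at h
  rw [Nat.odd_iff, Nat.odd_iff] at hpar
  rw [Nat.even_iff] at hV
  omega

theorem _root_.SimpleGraph.ncard_oddComponents_deleteVerts_le_one [Finite V] {u : Set V}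
    {w : V} (hw : w ∉ u) (hadj : ∀ x ≠ w, G.Adj w x) :
    ((⊤ : G.Subgraph).deleteVerts u).coe.oddComponents.ncard ≤ 1 := by
  set Gu := ((⊤ : G.Subgraph).deleteVerts u).coe
  have hw' : w ∈ ((⊤ : G.Subgraph).deleteVerts u).verts := by simpa using hw
  have hall : ∀ c : Gu.ConnectedComponent, c = Gu.connectedComponentMk ⟨w, hw'⟩ := by
    refine ConnectedComponent.ind fun x => ?_
    by_cases hx : x.1 = w
    · rw [show x = ⟨w, hw'⟩ from Subtype.ext hx]
    · refine ConnectedComponent.sound (Adj.reachable ?_).symm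
      simpa [Gu] using ⟨hw, x.2.2, hadj x.1 hx⟩
  exact (Set.ncard_le_one_iff (Set.toFinite _)).2 fun {a b} _ _ => (hall a).trans (hall b).symm

theorem _root_.SimpleGraph.CliqueFree.exists_isIndepSet_subset_fiber [Finite V]
    (hH : H.CliqueFree 3) {S : Set V} (f : V → κ)
    (hf : ∀ a ∉ S, ∀ b ∉ S, H.Adj a b → f a = f b) {v : V} (hv : v ∉ S)
    (hmin : ∀ w ∉ S, (H.neighborSet v).ncard ≤ (H.neighborSet w).ncard) :
    ∃ A ⊆ Sᶜ, v ∈ A ∧ (∀ a ∈ A, f a = f v) ∧ H.IsIndepSet A ∧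
      (H.neighborSet v).ncard ≤ A.ncard + S.ncard := by
  by_cases hu : ∃ u ∉ S, H.Adj v u
  · obtain ⟨u, huS, hvu⟩ := hu
    refine ⟨H.neighborSet u \ S, Set.sdiff_subset_compl _ _, ⟨hvu.symm, hv⟩,
      fun a ha => (hf u huS a ha.2 ha.1).symm.trans (hf v hv u huS hvu).symm,
      (isIndepSet_neighborSet_of_triangleFree H hH u).mono Set.sdiff_subset, ?_⟩
    have := Set.le_ncard_sdiff S (H.neighborSet u)
    have := hmin u huS
    omega
  · refine ⟨{v}, by simpa using hv, rfl, by simp, Set.pairwise_singleton _ _, ?_⟩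
    have : H.neighborSet v ⊆ S := fun w hw => by_contra fun hwS => hu ⟨w, hwS, hw⟩
    have := Set.ncard_le_ncard this
    omega

/-- The classes of `f` stand for the components of `H - S`. -/
theorem _root_.SimpleGraph.CliqueFree.exists_isIndepSet_ncard_ge [Finite V]
    (hH : H.CliqueFree 3) {S : Set V} (f : V → κ)
    (hf : ∀ a ∉ S, ∀ b ∉ S, H.Adj a b → f a = f b) (hS : Sᶜ.Nonempty) :
    ∃ v ∉ S, ∃ I : Set V, H.IsIndepSet I ∧ v ∈ I ∧
      (f '' Sᶜ).ncard + (H.neighborSet v).ncard ≤ I.ncard + S.ncard + 1 := by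
  obtain ⟨v, hvS, hvmin⟩ := Set.exists_min_image Sᶜ (fun w => (H.neighborSet w).ncard)
    (Set.toFinite _) hS
  obtain ⟨A, hAS, hvA, hAf, hAind, hdeg⟩ := hH.exists_isIndepSet_subset_fiber f hf hvS hvmin
  obtain ⟨R, hRS, hR⟩ := Set.exists_subset_bijOn (Sᶜ \ f ⁻¹' {f v}) f
  have hRcard : R.ncard + 1 = (f '' Sᶜ).ncard := by
    rw [hR.ncard_eq, Set.image_sdiff_preimage,
      Set.ncard_sdiff_singleton_add_one (Set.mem_image_of_mem f hvS)]
  have hsep : ∀ a ∉ S, ∀ b ∉ S, f a ≠ f b → ¬H.Adj a b := fun a ha b hb hne hab =>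
    hne (hf a ha b hb hab)
  have hcross : ∀ a ∈ A, ∀ r ∈ R, ¬H.Adj a r := fun a ha r hr =>
    hsep a (hAS ha) r (hRS hr).1 fun h => (hRS hr).2 ((hAf a ha).symm.trans h).symm
  refine ⟨v, hvS, A ∪ R, ?_, Or.inl hvA, ?_⟩
  · refine Set.pairwise_union.2 ⟨hAind, fun r hr r' hr' hne => ?_, fun a ha r hr _ =>
      ⟨hcross a ha r hr, fun h => hcross a ha r hr h.symm⟩⟩
    exact hsep r (hRS hr).1 r' (hRS hr').1 fun h => hne (hR.injOn hr hr' h)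
  · have hdisj : Disjoint A R := Set.disjoint_left.2 fun a ha har => (hRS har).2 (hAf a ha)
    rw [Set.ncard_union_eq hdisj]
    omega

def _root_.SimpleGraph.joinComplete (H : SimpleGraph V) (d : ℕ) : SimpleGraph (V ⊕ Fin d) :=
  (H ⊕g ⊤) ⊔ completeBipartiteGraph V (Fin d)

theorem _root_.SimpleGraph.joinComplete_adj_inr {d : ℕ} (i : Fin d) {x : V ⊕ Fin d}
    (hx : x ≠ .inr i) : (H.joinComplete d).Adj (.inr i) x := by
  cases x with
  | inl a => simp [joinComplete, completeBipartiteGraph]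
  | inr j => simpa [joinComplete] using fun h => hx (congrArg Sum.inr h.symm)

def _root_.SimpleGraph.Embedding.inlJoinComplete (H : SimpleGraph V) (d : ℕ) :
    H ↪g H.joinComplete d where
  toEmbedding := .inl
  map_rel_iff' := by simp [joinComplete, completeBipartiteGraph]

theorem _root_.SimpleGraph.exists_surjOn_connectedComponent_deleteVerts_joinComplete {d : ℕ}
    {u : Set (V ⊕ Fin d)} (hinr : ∀ i, Sum.inr i ∈ u)
    [Nonempty ((⊤ : (H.joinComplete d).Subgraph).deleteVerts u).coe.ConnectedComponent] :
    ∃ f : V → ((⊤ : (H.joinComplete d).Subgraph).deleteVerts u).coe.ConnectedComponent,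
      (∀ a ∉ Sum.inl ⁻¹' u, ∀ b ∉ Sum.inl ⁻¹' u, H.Adj a b → f a = f b) ∧
      Set.SurjOn f (Sum.inl ⁻¹' u)ᶜ Set.univ := by
  classical
  set Ju := ((⊤ : (H.joinComplete d).Subgraph).deleteVerts u).coe
  -- the junk value `Classical.arbitrary _` is only taken on `Sum.inl ⁻¹' u`
  refine ⟨fun a => if h : Sum.inl a ∉ u
    then Ju.connectedComponentMk ⟨.inl a, by simpa using h⟩ else Classical.arbitrary _,
    fun a ha b hb hab => ?_, fun c _ => ?_⟩
  · simp only [dif_pos (show Sum.inl a ∉ u from ha), dif_pos (show Sum.inl b ∉ u from hb)]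
    refine ConnectedComponent.sound (Adj.reachable ?_)
    simpa [Ju] using ⟨ha, hb, (Embedding.inlJoinComplete H d).map_adj_iff.2 hab⟩
  · induction c using ConnectedComponent.ind with
    | h x =>
      obtain ⟨a | i, hx⟩ := x
      · have ha : Sum.inl a ∉ u := by simpa using hx
        exact ⟨a, ha, by simp only [dif_pos ha]⟩
      · exact absurd (hinr i) (by simpa using hx)

theorem _root_.SimpleGraph.CliqueFree.not_isTutteViolator_joinComplete [Finite V]
    (hH : H.CliqueFree 3) {d : ℕ} (hpar : Even (Nat.card V + d))
    (hI : ∀ v (I : Set V), H.IsIndepSet I → v ∈ I → I.ncard ≤ d + (H.neighborSet v).ncard)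
    (u : Set (V ⊕ Fin d)) : ¬(H.joinComplete d).IsTutteViolator u := by
  intro hu
  have hodd := hu.ncard_add_two_le (by simpa [Nat.card_sum] using hpar)
  by_cases hinr : ∃ i, Sum.inr i ∉ u
  · obtain ⟨i, hi⟩ := hinr
    have := ncard_oddComponents_deleteVerts_le_one hi fun x hx =>
      joinComplete_adj_inr (H := H) i hx
    omega
  push Not at hinr
  have hu : (Sum.inl ⁻¹' u).ncard + d = u.ncard := by
    rw [← Set.ncard_preimage_inl_add_ncard_preimage_inr u,
      show Sum.inr ⁻¹' u = Set.univ from Set.eq_univ_of_forall hinr, Set.ncard_univ,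
      Nat.card_fin]
  set Ju := ((⊤ : (H.joinComplete d).Subgraph).deleteVerts u).coe
  obtain ⟨c₀, -⟩ : Ju.oddComponents.Nonempty := Set.nonempty_of_ncard_ne_zero (by omega)
  have : Nonempty Ju.ConnectedComponent := ⟨c₀⟩
  obtain ⟨f, hf, hsurj⟩ :=
    exists_surjOn_connectedComponent_deleteVerts_joinComplete (H := H) hinr
  have hcard := Set.ncard_le_ncard ((Set.subset_univ Ju.oddComponents).trans hsurj)
  obtain ⟨v, hvS, I, hIind, hvI, hIcard⟩ := hH.exists_isIndepSet_ncard_ge f hf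
    (Set.nonempty_of_ncard_ne_zero (s := f '' _) (by omega)).of_image
  have := hI v I hIind hvI
  omega

theorem _root_.SimpleGraph.CliqueFree.colorable_compl_of_forall_isIndepSet [Finite V]
    (hH : H.CliqueFree 3) {m : ℕ} (hm : Even m)
    (hI : ∀ v (I : Set V), H.IsIndepSet I → v ∈ I →
      I.ncard + Nat.card V ≤ m + (H.neighborSet v).ncard) :
    Hᶜ.Colorable (m / 2) := by
  have hnm : Nat.card V ≤ m := by
    rcases isEmpty_or_nonempty V with hV | hV
    · simp
    · obtain ⟨v, -, I, hIind, hvI, hI'⟩ := hH.exists_isIndepSet_ncard_ge (S := ∅)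
        (fun _ => ()) (by simp) (by simp)
      have := hI v I hIind hvI
      simp only [Set.compl_empty, Set.image_univ, Set.range_const, Set.ncard_singleton,
        Set.ncard_empty] at hI'
      omega
  obtain ⟨d, rfl⟩ : ∃ d, m = Nat.card V + d := ⟨m - Nat.card V, by omega⟩
  obtain ⟨M, hM⟩ := tutte.2 (hH.not_isTutteViolator_joinComplete hm
    fun v I hIind hvI => by have := hI v I hIind hvI; omega)
  refine (hM.1.colorable_compl (Embedding.inlJoinComplete H d) fun a => hM.2 _).mono ?_
  have := hM.1.two_mul_card_edgeSet_le
  rw [hM.2.verts_eq_univ, Nat.card_univ, Nat.card_sum, Nat.card_fin] at this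
  omega

end

theorem compl_cliqueFree_three {V : Type*} {G : SimpleGraph V}
    (h : ∀ a b c : V, a ≠ b → a ≠ c → b ≠ c → G.Adj a b ∨ G.Adj a c ∨ G.Adj b c) :
    Gᶜ.CliqueFree 3 := by
  classical
  intro s hs
  obtain ⟨a, b, c, hab, hac, hbc, -⟩ := is3Clique_iff.1 hs
  rw [compl_adj] at hab hac hbc
  rcases h a b c hab.1 hac.1 hbc.1 with h | h | h
  exacts [hab.2 h, hac.2 h, hbc.2 h]

theorem ncard_le_omegaAt {V : Type*} [Fintype V] {G : SimpleGraph V} {I : Set V}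
    (hI : G.IsClique I) {v : V} (hv : v ∈ I) : I.ncard ≤ omegaAt G v := by
  refine le_csSup ⟨Fintype.card V, ?_⟩ ?_
  · rintro _ ⟨s, hs, -⟩
    exact hs.card_eq ▸ s.card_le_univ
  · refine ⟨(Set.toFinite I).toFinset, ⟨by simpa using hI, ?_⟩, by simpa using hv⟩
    rw [Set.ncard_eq_toFinset_card I]

theorem degree'_add_degree'_compl {V : Type*} [Finite V] (G : SimpleGraph V) (v : V) :
    degree' G v + degree' Gᶜ v + 1 = Nat.card V := by
  have h := Set.ncard_add_ncard_compl {v}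
  rw [← neighborSet_union_compl_neighborSet_eq G v,
    Set.ncard_union_eq (compl_neighborSet_disjoint G v), Set.ncard_singleton] at h
  rw [degree', degree']
  omega

theorem gammaLocalAt_le_gammaLocal {V : Type*} [Finite V] (G : SimpleGraph V) (v : V) :
    gammaLocalAt G v ≤ gammaLocal G := by
  refine le_csSup (Set.Finite.bddAbove ?_) ⟨v, rfl⟩
  refine (Set.finite_range (gammaLocalAt G)).subset ?_
  rintro _ ⟨w, rfl⟩
  exact ⟨w, rfl⟩

theorem ncard_add_card_le_two_mul_gammaLocal {V : Type*} [Fintype V] (G : SimpleGraph V)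
    {v : V} {I : Set V} (hI : G.IsClique I) (hv : v ∈ I) :
    I.ncard + Nat.card V ≤ 2 * gammaLocal G + degree' Gᶜ v := by
  have hω := ncard_le_omegaAt hI hv
  have hdeg := degree'_add_degree'_compl G v
  have hγ := gammaLocalAt_le_gammaLocal G v
  rw [gammaLocalAt] at hγ
  omega

theorem stmt2 {V : Type*} [Fintype V] (G : SimpleGraph V)
    (halpha : ∀ a b c : V, a ≠ b → a ≠ c → b ≠ c → G.Adj a b ∨ G.Adj a c ∨ G.Adj b c) :
    G.chromaticNumber ≤ (gammaLocal G : ℕ∞) := by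
  have hcol := (compl_cliqueFree_three halpha).colorable_compl_of_forall_isIndepSet
    (even_two_mul (gammaLocal G)) fun v I hI hv =>
      ncard_add_card_le_two_mul_gammaLocal G ((isIndepSet_compl _).1 hI) hv
  rw [compl_compl, Nat.mul_div_cancel_left _ two_pos] at hcol
  exact hcol.chromaticNumber_le

end Paper
end

section
/- Let G be a finite simple graph that is not skeletal. Then there exists a spanning subgraph G' of G (same vertex set, E(G') ⊆ E(G)) such that: G' is skeletal; χ(G') = χ(G); if G is claw-free then G' is claw-free; if G is quasi-line then G' is quasi-line; and if the complement of G is 3-colourable then the complement of G' is 3-colourable. -/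
open SimpleGraph

namespace Paper

variable {V : Type*} {W : Type*}

/-!
Repeatedly delete an edge `ab` between the cliques of a nonskeletal homogeneous pair `(A, B)`
whose deletion keeps `ω(G[A ∪ B])`. Then `A` is not complete to `B`, and by homogeneity every
vertex outside `A ∪ B` sees all or none of each clique; this is all that claw-freeness,
quasi-lineness and 3-colourability of the complement need. For the chromatic number, a colouring
of `G - ab` has at most `|A| + |B| - ω` colours shared by `A` and `B`, and by König's theorem the
nonedges between `A` and `B` contain a matching of that size: recolouring `A` and `B` within their
old palettes so that shared colours go exactly to matched pairs gives a colouring of `G`.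
-/

open Finset Function

section Konig

variable {α β : Type*}

def IsRelCover (r : α → β → Prop) (s : Finset α) (t : Finset β) (X : Finset α) (Y : Finset β) :
    Prop :=
  ∀ x ∈ s, ∀ y ∈ t, r x y → x ∈ X ∨ y ∈ Y

variable {r : α → β → Prop} {s : Finset α} {t : Finset β} {X : Finset α} {Y : Finset β}

theorem IsRelCover.flip (h : IsRelCover r s t X Y) : IsRelCover (flip r) t s Y X :=
  fun y hy x hx hxy => (h x hx y hy hxy).symm

theorem exists_min_isRelCover (r : α → β → Prop) (s : Finset α) (t : Finset β) :
    ∃ X ⊆ s, ∃ Y ⊆ t, IsRelCover r s t X Y ∧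
      ∀ X' ⊆ s, ∀ Y' ⊆ t, IsRelCover r s t X' Y' → #X + #Y ≤ #X' + #Y' := by
  classical
  obtain ⟨⟨X, Y⟩, hXY, hmin⟩ := Finset.exists_min_image
    ((s.powerset ×ˢ t.powerset).filter fun P => IsRelCover r s t P.1 P.2)
    (fun P => #P.1 + #P.2) ⟨(s, ∅), mem_filter.mpr ⟨by simp, fun x hx _ _ _ => .inl hx⟩⟩
  simp only [mem_filter, mem_product, mem_powerset] at hXY
  exact ⟨X, hXY.1.1, Y, hXY.1.2, hXY.2, fun X' hX' Y' hY' hcov =>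
    hmin (X', Y') (by simp [hX', hY', hcov])⟩

/-- Hall's condition holds from `X` into `t \ Y` for a minimum cover `(X, Y)`: otherwise a set
`S ⊆ X` with fewer neighbours `N` in `t \ Y` could be traded, `(X \ S, Y ∪ N)` being a smaller
cover. -/
theorem IsRelCover.exists_injective_of_min [DecidableEq β] (hX : X ⊆ s) (hY : Y ⊆ t)
    (hcov : IsRelCover r s t X Y)
    (hmin : ∀ X' ⊆ s, ∀ Y' ⊆ t, IsRelCover r s t X' Y' → #X + #Y ≤ #X' + #Y') :
    ∃ f : X → β, Injective f ∧ ∀ x, f x ∈ t \ Y ∧ r x (f x) := by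
  classical
  let N : X → Finset β := fun x => (t \ Y).filter (r x)
  suffices hall : ∀ S : Finset X, #S ≤ #(S.biUnion N) by
    obtain ⟨f, hf, hfN⟩ := (Finset.all_card_le_biUnion_card_iff_exists_injective N).mp hall
    exact ⟨f, hf, fun x => mem_filter.mp (hfN x)⟩
  intro S
  by_contra! hlt
  set S' := S.map (Embedding.subtype (· ∈ X))
  have hS' : S' ⊆ X := by
    intro x hx
    obtain ⟨x, -, rfl⟩ := mem_map.mp hx
    exact x.2
  have hNt : S.biUnion N ⊆ t := fun y hy => by
    obtain ⟨x, -, hy⟩ := mem_biUnion.mp hy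
    exact (mem_sdiff.mp (mem_filter.mp hy).1).1
  have hcov' : IsRelCover r s t (X \ S') (Y ∪ S.biUnion N) := by
    intro x hx y hy hxy
    by_cases hxS : x ∈ S'
    · obtain ⟨x', hx'S, rfl⟩ := mem_map.mp hxS
      by_cases hyY : y ∈ Y
      · exact .inr (mem_union_left _ hyY)
      · exact .inr (mem_union_right _ (mem_biUnion.mpr
          ⟨x', hx'S, mem_filter.mpr ⟨mem_sdiff.mpr ⟨hy, hyY⟩, hxy⟩⟩))
    · exact (hcov x hx y hy hxy).imp (fun h => mem_sdiff.mpr ⟨h, hxS⟩) (mem_union_left _)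
  have hle := hmin _ (sdiff_subset.trans hX) _ (union_subset hY hNt) hcov'
  have hS'card : #S' = #S := card_map _
  have hsdiff := card_sdiff_of_subset hS'
  have hunion := card_union_le Y (S.biUnion N)
  have hSX := card_le_card hS'
  omega

/-- König's theorem for the bipartite relation `r` between `s` and `t`, in the form: some cover
`(X, Y)` is matched by `|X| + |Y|` disjoint related pairs. -/
theorem exists_isRelCover_and_matching (r : α → β → Prop) (s : Finset α) (t : Finset β) :
    ∃ X Y, IsRelCover r s t X Y ∧ ∃ p : X ⊕ Y → α, ∃ q : X ⊕ Y → β,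
      Injective p ∧ Injective q ∧ ∀ i, p i ∈ s ∧ q i ∈ t ∧ r (p i) (q i) := by
  classical
  obtain ⟨X, hX, Y, hY, hcov, hmin⟩ := exists_min_isRelCover r s t
  obtain ⟨f, hf, hft⟩ := hcov.exists_injective_of_min hX hY hmin
  obtain ⟨g, hg, hgs⟩ := hcov.flip.exists_injective_of_min hY hX
    fun Y' hY' X' hX' h => by simpa [add_comm] using hmin X' hX' Y' hY' h.flip
  refine ⟨X, Y, hcov, Sum.elim (↑) g, Sum.elim f (↑),
    Subtype.val_injective.sumElim hg fun x y h => (mem_sdiff.mp (hgs y).1).2 (h ▸ x.2),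
    hf.sumElim Subtype.val_injective fun x y h => (mem_sdiff.mp (hft x).1).2 (h ▸ y.2), ?_⟩
  rintro (x | y)
  · exact ⟨hX x.2, (mem_sdiff.mp (hft x).1).1, (hft x).2⟩
  · exact ⟨(mem_sdiff.mp (hgs y).1).1, hY y.2, (hgs y).2⟩

end Konig

theorem exists_injOn_mapsTo_extend {α β ι : Type*} [Nonempty β] {s : Finset α} {t : Finset β}
    (hst : #s = #t) {p : ι → α} {γ : ι → β} (hp : Injective p) (hγ : Injective γ)
    (hps : ∀ i, p i ∈ s) (hγt : ∀ i, γ i ∈ t) :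
    ∃ f : α → β, Set.InjOn f s ∧ Set.MapsTo f s t ∧ ∀ i, f (p i) = γ i := by
  classical
  let p' : ι → s := fun i => ⟨p i, hps i⟩
  have hp' : Injective p' := fun i j h => hp (congrArg Subtype.val h)
  obtain ⟨g, hg⟩ := Set.MapsTo.exists_equiv_extend_of_card_eq (t := t) (s := Set.range p')
    (f := extend p' γ fun _ => Classical.arbitrary β) (by simpa using hst)
    (by rintro _ ⟨i, rfl⟩; simpa [hp'.extend_apply] using hγt i)
    (by rintro _ ⟨i, rfl⟩ _ ⟨j, rfl⟩ h; simp only [hp'.extend_apply] at h; rw [hγ h])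
  refine ⟨fun x => if h : x ∈ s then g ⟨x, h⟩ else Classical.arbitrary β, ?_, ?_, fun i => ?_⟩
  · intro x hx y hy hxy
    simp only [mem_coe] at hx hy
    simp only [dif_pos hx, dif_pos hy] at hxy
    exact congrArg Subtype.val (g.injective (Subtype.ext hxy))
  · intro x hx
    simp only [mem_coe] at hx
    simp [hx]
  · simpa [hps i, hp'.extend_apply] using hg (p' i) ⟨i, rfl⟩

section Cliques

variable {G : SimpleGraph V} {S : Set V}

theorem bddAbove_cliqueSizes (G : SimpleGraph V) (hS : S.Finite) :
    BddAbove {n | ∃ s : Finset V, ↑s ⊆ S ∧ G.IsNClique n s} := by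
  refine ⟨#hS.toFinset, ?_⟩
  rintro n ⟨s, hsS, hs⟩
  rw [← hs.card_eq]
  exact card_le_card fun x hx => hS.mem_toFinset.mpr (hsS hx)

theorem card_le_cliqueNumOn (hS : S.Finite) {s : Finset V} (hsS : ↑s ⊆ S)
    (hs : G.IsClique (s : Set V)) : #s ≤ cliqueNumOn G S :=
  le_csSup (bddAbove_cliqueSizes G hS) ⟨s, hsS, hs, rfl⟩

theorem exists_isNClique_cliqueNumOn (G : SimpleGraph V) (hS : S.Finite) :
    ∃ s : Finset V, ↑s ⊆ S ∧ G.IsNClique (cliqueNumOn G S) s := by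
  have hne : {n | ∃ s : Finset V, ↑s ⊆ S ∧ G.IsNClique n s}.Nonempty :=
    ⟨0, ∅, by simp, by simp [isNClique_iff]⟩
  exact Nat.sSup_mem hne (bddAbove_cliqueSizes G hS)

theorem isClique_union {s t : Set V} (hs : G.IsClique s) (ht : G.IsClique t)
    (hst : ∀ x ∈ s, ∀ y ∈ t, x ≠ y → G.Adj x y) : G.IsClique (s ∪ t) :=
  have : Std.Symm G.Adj := ⟨fun _ _ h => h.symm⟩
  Set.pairwise_union_of_symm.mpr ⟨hs, ht, hst⟩

theorem IsClique.injOn_coloring {β : Type*} (hs : G.IsClique S) (c : G.Coloring β) :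
    S.InjOn c := fun _ hx _ hy hxy => by_contra fun hne => c.valid (hs hx hy hne) hxy

theorem IsClique.card_le_card_image_coloring {β : Type*} [DecidableEq β] {K s : Finset V}
    (hK : G.IsClique (K : Set V)) (c : G.Coloring β) (hKs : K ⊆ s) : #K ≤ #(s.image c) := by
  rw [← card_image_of_injOn (IsClique.injOn_coloring hK c)]
  exact card_le_card (image_subset_image hKs)

end Cliques

section DeleteEdge

variable {G : SimpleGraph V} {a b u w : V}

theorem adj_deleteEdges_of_ne (h : G.Adj u w) (ha : u ≠ a) (hb : u ≠ b) :
    (G.deleteEdges {s(a, b)}).Adj u w := by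
  simp [h, ha, hb]

theorem IsClique.deleteEdges_of_not_mem_and {s : Set V} (hs : G.IsClique s)
    (hab : ¬(a ∈ s ∧ b ∈ s)) : (G.deleteEdges {s(a, b)}).IsClique s := by
  intro x hx y hy hxy
  simp only [deleteEdges_adj, Set.mem_singleton_iff, Sym2.eq_iff]
  refine ⟨hs hx hy hxy, ?_⟩
  rintro (⟨rfl, rfl⟩ | ⟨rfl, rfl⟩) <;> tauto

end DeleteEdge

namespace IsHomPair

variable {G : SimpleGraph V} {A B : Finset V} {u x x' y : V}

theorem isClique_left (hp : IsHomPair G A B) : G.IsClique (A : Set V) := hp.2.2.1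

theorem isClique_right (hp : IsHomPair G A B) : G.IsClique (B : Set V) := hp.2.2.2.1

theorem disjoint (hp : IsHomPair G A B) : Disjoint A B := hp.2.2.2.2.2.2.1

theorem ne_of_mem (hp : IsHomPair G A B) (hx : x ∈ A) (hy : y ∈ B) : x ≠ y :=
  fun h => disjoint_left.mp hp.disjoint hx (h ▸ hy)

theorem symm (hp : IsHomPair G A B) : IsHomPair G B A := by
  obtain ⟨hA, hB, hcA, hcB, hnA, hnB, hAB, hcard, hhom⟩ := hp
  exact ⟨hB, hA, hcB, hcA, hnB, hnA, hAB.symm, by omega,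
    fun v hv hvB hvA => (hhom v hv hvA hvB).symm⟩

theorem adj_of_adj_left (hp : IsHomPair G A B) (huA : u ∉ A) (huB : u ∉ B) (hx : x ∈ A)
    (hux : G.Adj u x) (hx' : x' ∈ A) : G.Adj u x' :=
  ((hp.2.2.2.2.2.2.2.2 u (Set.mem_univ u) huA huB).1.resolve_right fun h => h x hx hux) x' hx'

theorem adj_of_adj_right (hp : IsHomPair G A B) (huA : u ∉ A) (huB : u ∉ B) (hx : x ∈ B)
    (hux : G.Adj u x) (hx' : x' ∈ B) : G.Adj u x' :=
  hp.symm.adj_of_adj_left huB huA hx hux hx'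

end IsHomPair

theorem exists_nonadj_matching {G : SimpleGraph V} {A B : Finset V}
    (hA : G.IsClique (A : Set V)) (hB : G.IsClique (B : Set V)) (hAB : Disjoint A B) :
    ∃ k, #A + #B ≤ cliqueNumOn G (↑A ∪ ↑B) + k ∧ ∃ p q : Fin k → V, Injective p ∧ Injective q ∧
      ∀ i, p i ∈ A ∧ q i ∈ B ∧ ¬G.Adj (p i) (q i) := by
  classical
  obtain ⟨X, Y, hcov, p, q, hp, hq, hpq⟩ :=
    exists_isRelCover_and_matching (fun x y => ¬G.Adj x y) A B
  let e := Fintype.equivFin (X ⊕ Y)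
  refine ⟨Fintype.card (X ⊕ Y), ?_, p ∘ e.symm, q ∘ e.symm, hp.comp e.symm.injective,
    hq.comp e.symm.injective, fun i => hpq _⟩
  have hC : G.IsClique (↑(A \ X ∪ B \ Y) : Set V) := by
    rw [coe_union]
    refine isClique_union (hA.subset (by simp)) (hB.subset (by simp)) fun x hx y hy _ => ?_
    simp only [coe_sdiff, Set.mem_sdiff, mem_coe] at hx hy
    by_contra hxy
    exact (hcov x hx.1 y hy.1 hxy).elim hx.2 hy.2
  have hCω := card_le_cliqueNumOn (S := ↑A ∪ ↑B) (Set.toFinite _) (by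
    rw [coe_union]
    exact Set.union_subset_union (coe_subset.mpr sdiff_subset) (coe_subset.mpr sdiff_subset)) hC
  rw [card_union_of_disjoint (hAB.mono sdiff_subset sdiff_subset)] at hCω
  have hAX := le_card_sdiff X A
  have hBY := le_card_sdiff Y B
  simp only [Fintype.card_sum, Fintype.card_coe]
  omega

namespace IsHomPair

variable {G : SimpleGraph V} {A B : Finset V} {a b : V}

theorem exists_not_adj (hp : IsHomPair G A B) (ha : a ∈ A) (hb : b ∈ B)
    (hω : cliqueNumOn G (↑A ∪ ↑B) ≤ cliqueNumOn (G.deleteEdges {s(a, b)}) (↑A ∪ ↑B)) :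
    ∃ x ∈ A, ∃ y ∈ B, ¬G.Adj x y := by
  classical
  by_contra! hcomp
  have hfin : (↑A ∪ ↑B : Set V).Finite := Set.toFinite _
  have hAB : #(A ∪ B) ≤ cliqueNumOn G (↑A ∪ ↑B) := by
    refine card_le_cliqueNumOn hfin (by simp) ?_
    rw [coe_union]
    exact isClique_union hp.isClique_left hp.isClique_right fun x hx y hy _ => hcomp x hx y hy
  obtain ⟨K, hKS, hK⟩ := exists_isNClique_cliqueNumOn (G.deleteEdges {s(a, b)}) hfin
  have hKAB : K ⊆ A ∪ B := fun x hx => by simpa using hKS hx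
  have hab : ¬(a ∈ K ∧ b ∈ K) := fun h => by
    simpa using hK.isClique h.1 h.2 (hp.ne_of_mem ha hb)
  have hKlt : #K < #(A ∪ B) := by
    refine card_lt_card ((ssubset_iff_of_subset hKAB).mpr ?_)
    by_cases haK : a ∈ K
    · exact ⟨b, by simp [hb], fun hbK => hab ⟨haK, hbK⟩⟩
    · exact ⟨a, by simp [ha], haK⟩
  have hKω := hK.card_eq
  omega

end IsHomPair

namespace IsHomPair

variable {G : SimpleGraph V} {A B : Finset V} {a b : V}

theorem clawFree_deleteEdges (hp : IsHomPair G A B) (ha : a ∈ A) (hb : b ∈ B)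
    (hω : cliqueNumOn G (↑A ∪ ↑B) ≤ cliqueNumOn (G.deleteEdges {s(a, b)}) (↑A ∪ ↑B))
    (hG : ClawFree G) : ClawFree (G.deleteEdges {s(a, b)}) := by
  obtain ⟨x₀, hx₀, y₀, hy₀, hxy₀⟩ := hp.exists_not_adj ha hb hω
  have hle := deleteEdges_le (G := G) {s(a, b)}
  -- such a `v` lies outside `A ∪ B` and `z` misses `A ∪ B`, so `v; x₀, y₀, z` is a claw
  have core : ∀ v z, G.Adj v a → G.Adj v b → G.Adj v z → ¬G.Adj z a → ¬G.Adj z b →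
      z ≠ a → z ≠ b → False := by
    intro v z hva hvb hvz hza hzb hza' hzb'
    have hzA : z ∉ A := fun hz => hza (hp.isClique_left hz ha hza')
    have hzB : z ∉ B := fun hz => hzb (hp.isClique_right hz hb hzb')
    have hvA : v ∉ A := fun hv => hza (hp.adj_of_adj_left hzA hzB hv hvz.symm ha)
    have hvB : v ∉ B := fun hv => hzb (hp.adj_of_adj_right hzA hzB hv hvz.symm hb)
    exact hG ⟨v, x₀, y₀, z, hp.adj_of_adj_left hvA hvB ha hva hx₀,
      hp.adj_of_adj_right hvA hvB hb hvb hy₀, hvz, hxy₀,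
      fun h => hza (hp.adj_of_adj_left hzA hzB hx₀ h.symm ha),
      fun h => hzb (hp.adj_of_adj_right hzA hzB hy₀ h.symm hb),
      hp.ne_of_mem hx₀ hy₀, fun h => hzA (h ▸ hx₀), fun h => hzB (h ▸ hy₀)⟩
  have leaves : ∀ v x y z, (G.deleteEdges {s(a, b)}).Adj v x →
      (G.deleteEdges {s(a, b)}).Adj v y → (G.deleteEdges {s(a, b)}).Adj v z → G.Adj x y →
      ¬(G.deleteEdges {s(a, b)}).Adj x y → ¬(G.deleteEdges {s(a, b)}).Adj x z →
      ¬(G.deleteEdges {s(a, b)}).Adj y z → x ≠ z → y ≠ z → False := by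
    intro v x y z hvx hvy hvz hxy hxy' hxz hyz hxz' hyz'
    have hxy_ab : s(x, y) ∈ ({s(a, b)} : Set (Sym2 V)) :=
      not_not.mp fun h => hxy' (deleteEdges_adj.mpr ⟨hxy, h⟩)
    rcases Sym2.eq_iff.mp hxy_ab with ⟨rfl, rfl⟩ | ⟨rfl, rfl⟩
    · exact core v z (hle hvx) (hle hvy) (hle hvz)
        (fun h => hxz (adj_deleteEdges_of_ne h hxz'.symm hyz'.symm).symm)
        (fun h => hyz (adj_deleteEdges_of_ne h hxz'.symm hyz'.symm).symm) hxz'.symm hyz'.symm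
    · exact core v z (hle hvy) (hle hvx) (hle hvz)
        (fun h => hyz (adj_deleteEdges_of_ne h hyz'.symm hxz'.symm).symm)
        (fun h => hxz (adj_deleteEdges_of_ne h hyz'.symm hxz'.symm).symm) hyz'.symm hxz'.symm
  rintro ⟨v, x, y, z, hvx, hvy, hvz, hxy, hxz, hyz, hne_xy, hne_xz, hne_yz⟩
  by_cases h₁ : G.Adj x y
  · exact leaves v x y z hvx hvy hvz h₁ hxy hxz hyz hne_xz hne_yz
  by_cases h₂ : G.Adj x z
  · exact leaves v x z y hvx hvz hvy h₂ hxz hxy (fun h => hyz h.symm) hne_xy hne_yz.symm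
  by_cases h₃ : G.Adj y z
  · exact leaves v y z x hvy hvz hvx h₃ hyz (fun h => hxy h.symm) (fun h => hxz h.symm)
      hne_xy.symm hne_xz.symm
  exact hG ⟨v, x, y, z, hle hvx, hle hvy, hle hvz, h₁, h₂, h₃, hne_xy, hne_xz, hne_yz⟩

theorem exists_cliques_deleteEdges_of_forall_adj (hp : IsHomPair G A B) (ha : a ∈ A)
    (hb : b ∈ B) {S T : Set V} (hS : G.IsClique S) (hT : G.IsClique T) (hbS : b ∈ S)
    (hTA : ∀ u ∈ T, u ∉ A → u ∉ B → ∀ x ∈ A, G.Adj u x) :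
    ∃ S' T', (G.deleteEdges {s(a, b)}).IsClique S' ∧ (G.deleteEdges {s(a, b)}).IsClique T' ∧
      S ∪ T ⊆ S' ∪ T' := by
  refine ⟨T \ (↑A ∪ ↑B) ∪ ↑A, S \ (↑A ∪ ↑B) ∪ ↑B, ?_, ?_, ?_⟩
  · refine IsClique.deleteEdges_of_not_mem_and (isClique_union (hT.subset Set.sdiff_subset)
      hp.isClique_left fun u hu x hx _ => ?_) fun h => ?_
    · simp only [Set.mem_sdiff, Set.mem_union, mem_coe, not_or] at hu
      exact hTA u hu.1 hu.2.1 hu.2.2 x hx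
    · simp only [Set.mem_union, Set.mem_sdiff, mem_coe] at h
      exact h.2.elim (fun h' => h'.2 (.inr hb)) fun h' => hp.ne_of_mem h' hb rfl
  · refine IsClique.deleteEdges_of_not_mem_and (isClique_union (hS.subset Set.sdiff_subset)
      hp.isClique_right fun u hu y hy _ => ?_) fun h => ?_
    · simp only [Set.mem_sdiff, Set.mem_union, mem_coe, not_or] at hu
      exact hp.adj_of_adj_right hu.2.1 hu.2.2 hb
        (hS hu.1 hbS fun h => hu.2.2 (h ▸ hb)) hy
    · simp only [Set.mem_union, Set.mem_sdiff, mem_coe] at h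
      exact h.1.elim (fun h' => h'.2 (.inl ha)) fun h' => hp.ne_of_mem ha h' rfl
  · intro u hu
    by_cases huA : u ∈ A
    · exact .inl (.inr huA)
    by_cases huB : u ∈ B
    · exact .inr (.inr huB)
    have hu' : u ∉ (↑A ∪ ↑B : Set V) := by simp [huA, huB]
    exact hu.elim (fun h => .inr (.inl ⟨h, hu'⟩)) fun h => .inl (.inl ⟨h, hu'⟩)

theorem quasiLine_deleteEdges (hp : IsHomPair G A B) (ha : a ∈ A) (hb : b ∈ B)
    (hω : cliqueNumOn G (↑A ∪ ↑B) ≤ cliqueNumOn (G.deleteEdges {s(a, b)}) (↑A ∪ ↑B))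
    (hG : QuasiLine G) : QuasiLine (G.deleteEdges {s(a, b)}) := by
  obtain ⟨x₀, hx₀, y₀, hy₀, hxy₀⟩ := hp.exists_not_adj ha hb hω
  intro v
  have hsub : (G.deleteEdges {s(a, b)}).neighborSet v ⊆ G.neighborSet v :=
    fun _ hu => deleteEdges_le _ hu
  have key : ∀ S T : Set V, G.IsClique S → G.IsClique T → S ⊆ G.neighborSet v →
      T ⊆ G.neighborSet v → G.neighborSet v ⊆ S ∪ T → a ∈ S → b ∈ S →
      ∃ S' T', (G.deleteEdges {s(a, b)}).IsClique S' ∧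
        (G.deleteEdges {s(a, b)}).IsClique T' ∧
        (G.deleteEdges {s(a, b)}).neighborSet v ⊆ S' ∪ T' := by
    intro S T hS hT hSv hTv hcov haS hbS
    by_cases hTA : ∀ u ∈ T, u ∉ A → u ∉ B → ∀ x ∈ A, G.Adj u x
    · obtain ⟨S', T', h₁, h₂, h₃⟩ :=
        hp.exists_cliques_deleteEdges_of_forall_adj ha hb hS hT hbS hTA
      exact ⟨S', T', h₁, h₂, hsub.trans (hcov.trans h₃)⟩
    by_cases hTB : ∀ u ∈ T, u ∉ A → u ∉ B → ∀ y ∈ B, G.Adj u y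
    · obtain ⟨S', T', h₁, h₂, h₃⟩ :=
        hp.symm.exists_cliques_deleteEdges_of_forall_adj hb ha hS hT haS fun u hu huB huA => hTB u hu huA huB
      rw [Sym2.eq_swap] at h₁ h₂
      exact ⟨S', T', h₁, h₂, hsub.trans (hcov.trans h₃)⟩
    -- `T` has a vertex `u` missing `A` and a vertex `w` missing `B`; then `v ∉ A ∪ B` sees
    -- all of `A ∪ B`, which cannot meet `T`, so the nonadjacent `x₀, y₀` both lie in `S`
    exfalso
    push Not at hTA hTB
    obtain ⟨u, huT, huA, huB, x, hx, hux⟩ := hTA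
    obtain ⟨w, hwT, hwA, hwB, y, hy, hwy⟩ := hTB
    have hvA : v ∉ A := fun hv => hux (hp.adj_of_adj_left huA huB hv (hTv huT).symm hx)
    have hvB : v ∉ B := fun hv => hwy (hp.adj_of_adj_right hwA hwB hv (hTv hwT).symm hy)
    have hx₀S : x₀ ∈ S := (hcov (hp.adj_of_adj_left hvA hvB ha (hSv haS) hx₀)).resolve_right
      fun h => hux (hp.adj_of_adj_left huA huB hx₀ (hT huT h fun e => huA (e ▸ hx₀)) hx)
    have hy₀S : y₀ ∈ S := (hcov (hp.adj_of_adj_right hvA hvB hb (hSv hbS) hy₀)).resolve_right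
      fun h => hwy (hp.adj_of_adj_right hwA hwB hy₀ (hT hwT h fun e => hwB (e ▸ hy₀)) hy)
    exact hxy₀ (hS hx₀S hy₀S (hp.ne_of_mem hx₀ hy₀))
  obtain ⟨S, T, hS, hT, hcov⟩ := hG v
  have hS₀ := hS.subset (Set.inter_subset_left (t := G.neighborSet v))
  have hT₀ := hT.subset (Set.inter_subset_left (t := G.neighborSet v))
  have hcov₀ : G.neighborSet v ⊆ S ∩ G.neighborSet v ∪ T ∩ G.neighborSet v :=
    fun u hu => (hcov hu).imp (⟨·, hu⟩) (⟨·, hu⟩)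
  by_cases habS : a ∈ S ∩ G.neighborSet v ∧ b ∈ S ∩ G.neighborSet v
  · exact key _ _ hS₀ hT₀ Set.inter_subset_right Set.inter_subset_right hcov₀ habS.1 habS.2
  by_cases habT : a ∈ T ∩ G.neighborSet v ∧ b ∈ T ∩ G.neighborSet v
  · exact key _ _ hT₀ hS₀ Set.inter_subset_right Set.inter_subset_right
      (by rwa [Set.union_comm]) habT.1 habT.2
  exact ⟨_, _, IsClique.deleteEdges_of_not_mem_and hS₀ habS,
    IsClique.deleteEdges_of_not_mem_and hT₀ habT, hsub.trans hcov₀⟩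

end IsHomPair

namespace IsHomPair

variable {G : SimpleGraph V} {A B : Finset V} {a b : V} {β : Type*}

theorem nonempty_coloring_compl_deleteEdges (hp : IsHomPair G A B) (ha : a ∈ A) (hb : b ∈ B)
    (hω : cliqueNumOn G (↑A ∪ ↑B) ≤ cliqueNumOn (G.deleteEdges {s(a, b)}) (↑A ∪ ↑B))
    (c : Gᶜ.Coloring β) : Nonempty ((G.deleteEdges {s(a, b)})ᶜ.Coloring β) := by
  classical
  obtain ⟨x₀, hx₀, y₀, hy₀, hxy₀⟩ := hp.exists_not_adj ha hb hω
  have hc : ∀ {u w}, u ≠ w → c u = c w → G.Adj u w := fun hne heq =>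
    by_contra fun h => c.valid ((compl_adj G _ _).mpr ⟨hne, h⟩) heq
  have hcxy : c x₀ ≠ c y₀ := fun h => hxy₀ (hc (hp.ne_of_mem hx₀ hy₀) h)
  have hA : ∀ {u w}, u ∈ A → w ∉ A → w ∉ B → c x₀ = c w → G.Adj u w :=
    fun {_ w} hu hwA hwB h => (hp.adj_of_adj_left hwA hwB hx₀
      (hc (fun e : x₀ = w => hwA (e ▸ hx₀)) h).symm hu).symm
  have hB : ∀ {u w}, u ∈ B → w ∉ A → w ∉ B → c y₀ = c w → G.Adj u w :=
    fun {_ w} hu hwA hwB h => (hp.adj_of_adj_right hwA hwB hy₀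
      (hc (fun e : y₀ = w => hwB (e ▸ hy₀)) h).symm hu).symm
  -- the colour classes of `c` are cliques of `G`; moving `A` into the class of `x₀` and `B` into
  -- that of `y₀` keeps them cliques and separates `a` from `b`
  let c' : V → β := fun v => if v ∈ A then c x₀ else if v ∈ B then c y₀ else c v
  have hc'A : ∀ {u}, u ∈ A → c' u = c x₀ := fun hu => if_pos hu
  have hc'B : ∀ {u}, u ∈ B → c' u = c y₀ := fun hu =>
    (if_neg fun huA => hp.ne_of_mem huA hu rfl).trans (if_pos hu)
  have hc'O : ∀ {u}, u ∉ A → u ∉ B → c' u = c u := fun huA huB =>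
    (if_neg huA).trans (if_neg huB)
  refine ⟨Coloring.mk c' fun {u w} huw heq => ?_⟩
  rw [compl_adj] at huw
  refine huw.2 (deleteEdges_adj.mpr ⟨?_, fun h => ?_⟩)
  · by_cases huA : u ∈ A <;> by_cases hwA : w ∈ A
    · exact hp.isClique_left huA hwA huw.1
    · by_cases hwB : w ∈ B
      · exact (hcxy ((hc'A huA).symm.trans (heq.trans (hc'B hwB)))).elim
      · exact hA huA hwA hwB ((hc'A huA).symm.trans (heq.trans (hc'O hwA hwB)))
    · by_cases huB : u ∈ B
      · exact (hcxy ((hc'A hwA).symm.trans (heq.symm.trans (hc'B huB)))).elim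
      · exact (hA hwA huA huB ((hc'A hwA).symm.trans (heq.symm.trans (hc'O huA huB)))).symm
    · by_cases huB : u ∈ B <;> by_cases hwB : w ∈ B
      · exact hp.isClique_right huB hwB huw.1
      · exact hB huB hwA hwB ((hc'B huB).symm.trans (heq.trans (hc'O hwA hwB)))
      · exact (hB hwB huA huB ((hc'B hwB).symm.trans (heq.symm.trans (hc'O huA huB)))).symm
      · exact hc huw.1 ((hc'O huA huB).symm.trans (heq.trans (hc'O hwA hwB)))
  · rcases Sym2.eq_iff.mp h with ⟨rfl, rfl⟩ | ⟨rfl, rfl⟩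
    · exact hcxy ((hc'A ha).symm.trans (heq.trans (hc'B hb)))
    · exact hcxy ((hc'A ha).symm.trans (heq.symm.trans (hc'B hb)))

theorem nonempty_coloring_of_palettes (hp : IsHomPair G A B) (ha : a ∈ A) (hb : b ∈ B)
    (c : (G.deleteEdges {s(a, b)}).Coloring β) {fA fB : V → β} (hfA : Set.InjOn fA A)
    (hfA' : Set.MapsTo fA A (c '' A)) (hfB : Set.InjOn fB B) (hfB' : Set.MapsTo fB B (c '' B))
    (hfAB : ∀ x ∈ A, ∀ y ∈ B, fA x = fB y → ¬G.Adj x y) : Nonempty (G.Coloring β) := by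
  classical
  let c' : V → β := fun v => if v ∈ A then fA v else if v ∈ B then fB v else c v
  have hc'A : ∀ {u}, u ∈ A → c' u = fA u := fun hu => if_pos hu
  have hc'B : ∀ {u}, u ∈ B → c' u = fB u := fun hu =>
    (if_neg fun huA => hp.ne_of_mem huA hu rfl).trans (if_pos hu)
  have hc'O : ∀ {u}, u ∉ A → u ∉ B → c' u = c u := fun huA huB =>
    (if_neg huA).trans (if_neg huB)
  -- a neighbour `w ∉ A ∪ B` of a vertex of `A` sees all of `A`, also after the deletion,
  -- so its colour avoids the palette of `A`
  have hout : ∀ {u w}, w ∉ A → w ∉ B → G.Adj u w → c' u ≠ c' w := by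
    intro u w hwA hwB huw
    have hwa : w ≠ a := fun h => hwA (h ▸ ha)
    have hwb : w ≠ b := fun h => hwB (h ▸ hb)
    rw [hc'O hwA hwB]
    by_cases huA : u ∈ A
    · obtain ⟨x, hx, hcx⟩ := hfA' huA
      rw [hc'A huA, ← hcx]
      exact c.valid (adj_deleteEdges_of_ne (hp.adj_of_adj_left hwA hwB huA huw.symm hx)
        hwa hwb).symm
    by_cases huB : u ∈ B
    · obtain ⟨y, hy, hcy⟩ := hfB' huB
      rw [hc'B huB, ← hcy]
      exact c.valid (adj_deleteEdges_of_ne (hp.adj_of_adj_right hwA hwB huB huw.symm hy)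
        hwa hwb).symm
    rw [hc'O huA huB]
    exact c.valid (adj_deleteEdges_of_ne huw.symm hwa hwb).symm
  refine ⟨Coloring.mk c' fun {u w} huw => ?_⟩
  by_cases hw : w ∉ A ∧ w ∉ B
  · exact hout hw.1 hw.2 huw
  by_cases hu : u ∉ A ∧ u ∉ B
  · exact (hout hu.1 hu.2 huw.symm).symm
  rcases not_and_or.mp hu with huA | huB <;> rcases not_and_or.mp hw with hwA | hwB
  · rw [hc'A (not_not.mp huA), hc'A (not_not.mp hwA)]
    exact hfA.ne (not_not.mp huA) (not_not.mp hwA) huw.ne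
  · rw [hc'A (not_not.mp huA), hc'B (not_not.mp hwB)]
    exact fun h => hfAB u (not_not.mp huA) w (not_not.mp hwB) h huw
  · rw [hc'B (not_not.mp huB), hc'A (not_not.mp hwA)]
    exact fun h => hfAB w (not_not.mp hwA) u (not_not.mp huB) h.symm huw.symm
  · rw [hc'B (not_not.mp huB), hc'B (not_not.mp hwB)]
    exact hfB.ne (not_not.mp huB) (not_not.mp hwB) huw.ne

theorem nonempty_coloring_of_deleteEdges (hp : IsHomPair G A B) (ha : a ∈ A) (hb : b ∈ B)
    (hω : cliqueNumOn G (↑A ∪ ↑B) ≤ cliqueNumOn (G.deleteEdges {s(a, b)}) (↑A ∪ ↑B))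
    (c : (G.deleteEdges {s(a, b)}).Coloring β) : Nonempty (G.Coloring β) := by
  classical
  have hcA : Set.InjOn c A := IsClique.injOn_coloring
    (IsClique.deleteEdges_of_not_mem_and hp.isClique_left fun h => hp.ne_of_mem h.2 hb rfl) c
  have hcB : Set.InjOn c B := IsClique.injOn_coloring
    (IsClique.deleteEdges_of_not_mem_and hp.isClique_right fun h => hp.ne_of_mem ha h.1 rfl) c
  set D := A.image c ∩ B.image c
  obtain ⟨K, hKS, hK⟩ := exists_isNClique_cliqueNumOn (G.deleteEdges {s(a, b)})
    (S := ↑A ∪ ↑B) (Set.toFinite _)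
  have hKD : #K + #D ≤ #A + #B := by
    have h₁ := IsClique.card_le_card_image_coloring hK.isClique c (s := A ∪ B)
      fun x hx => by simpa using hKS hx
    have h₂ : #(A.image c ∪ B.image c) + #D = #(A.image c) + #(B.image c) :=
      card_union_add_card_inter _ _
    rw [image_union] at h₁
    rw [card_image_of_injOn hcA, card_image_of_injOn hcB] at h₂
    omega
  obtain ⟨k, hk, p, q, hpinj, hqinj, hpq⟩ :=
    exists_nonadj_matching hp.isClique_left hp.isClique_right hp.disjoint
  have hDk : #D ≤ k := by
    have hKω := hK.card_eq
    omega
  obtain ⟨j⟩ : Nonempty (D ↪ Fin k) := Function.Embedding.nonempty_of_card_le (by simpa using hDk)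
  have : Nonempty β := ⟨c a⟩
  obtain ⟨fA, hfA, hfA', hpA⟩ := exists_injOn_mapsTo_extend (card_image_of_injOn hcA).symm
    (hpinj.comp j.injective) Subtype.val_injective (fun d => (hpq (j d)).1)
    (fun d => (mem_inter.mp d.2).1)
  obtain ⟨fB, hfB, hfB', hqB⟩ := exists_injOn_mapsTo_extend (card_image_of_injOn hcB).symm
    (hqinj.comp j.injective) Subtype.val_injective (fun d => (hpq (j d)).2.1)
    (fun d => (mem_inter.mp d.2).2)
  rw [coe_image] at hfA' hfB'
  refine hp.nonempty_coloring_of_palettes ha hb c hfA hfA' hfB hfB' fun x hx y hy hxy => ?_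
  have hxD : fA x ∈ D := mem_inter.mpr
    ⟨by simpa [coe_image] using hfA' hx, by simpa [coe_image, hxy] using hfB' hy⟩
  let d : D := ⟨fA x, hxD⟩
  have hx' : x = p (j d) := hfA hx (hpq _).1 (hpA d).symm
  have hy' : y = q (j d) := hfB hy (hpq _).2.1 (hxy.symm.trans (hqB d).symm)
  rw [hx', hy']
  exact (hpq _).2.2

end IsHomPair

structure IsReduction (H G : SimpleGraph V) : Prop where
  le : H ≤ G
  chromaticNumber_eq : H.chromaticNumber = G.chromaticNumber
  clawFree : ClawFree G → ClawFree H
  quasiLine : QuasiLine G → QuasiLine H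
  colorable_compl : Gᶜ.Colorable 3 → Hᶜ.Colorable 3

theorem IsReduction.refl (G : SimpleGraph V) : IsReduction G G :=
  ⟨le_rfl, rfl, id, id, id⟩

theorem IsReduction.trans {G₁ G₂ G₃ : SimpleGraph V} (h₁₂ : IsReduction G₁ G₂)
    (h₂₃ : IsReduction G₂ G₃) : IsReduction G₁ G₃ :=
  ⟨h₁₂.le.trans h₂₃.le, h₁₂.chromaticNumber_eq.trans h₂₃.chromaticNumber_eq,
    h₁₂.clawFree ∘ h₂₃.clawFree, h₁₂.quasiLine ∘ h₂₃.quasiLine,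
    h₁₂.colorable_compl ∘ h₂₃.colorable_compl⟩

theorem exists_isReduction_deleteEdges_of_not_skeletal {G : SimpleGraph V} (hG : ¬Skeletal G) :
    ∃ a b, G.Adj a b ∧ IsReduction (G.deleteEdges {s(a, b)}) G := by
  simp only [Skeletal, IsSkeletalPair, not_forall, not_lt] at hG
  obtain ⟨A, B, hp, a, ha, b, hb, hab, hω⟩ := hG
  refine ⟨a, b, hab, deleteEdges_le _, le_antisymm (chromaticNumber_mono _ (deleteEdges_le _))
    (chromaticNumber_le_of_forall_imp fun n ⟨c⟩ => hp.nonempty_coloring_of_deleteEdges ha hb hω c),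
    hp.clawFree_deleteEdges ha hb hω, hp.quasiLine_deleteEdges ha hb hω,
    fun ⟨c⟩ => hp.nonempty_coloring_compl_deleteEdges ha hb hω c⟩

theorem stmt3_general {V : Type*} [Fintype V] (G : SimpleGraph V) :
    ∃ G' : SimpleGraph V, G' ≤ G ∧ Skeletal G' ∧
      G'.chromaticNumber = G.chromaticNumber ∧
      (ClawFree G → ClawFree G') ∧
      (QuasiLine G → QuasiLine G') ∧
      (Gᶜ.Colorable 3 → G'ᶜ.Colorable 3) := by
  suffices ∃ G', Skeletal G' ∧ IsReduction G' G by
    obtain ⟨G', hG', h⟩ := this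
    exact ⟨G', h.le, hG', h.chromaticNumber_eq, h.clawFree, h.quasiLine, h.colorable_compl⟩
  induction G using WellFoundedLT.induction with
  | _ G ih =>
    by_cases hG : Skeletal G
    · exact ⟨G, hG, .refl G⟩
    obtain ⟨a, b, hab, hred⟩ := exists_isReduction_deleteEdges_of_not_skeletal hG
    have hlt : G.deleteEdges {s(a, b)} < G :=
      hred.le.lt_of_ne fun h => by simpa using (h.symm ▸ hab : (G.deleteEdges {s(a, b)}).Adj a b)
    obtain ⟨G', hG', hred'⟩ := ih _ hlt
    exact ⟨G', hG', hred'.trans hred⟩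

theorem stmt3 {V : Type*} [Fintype V] (G : SimpleGraph V) (h : ¬Skeletal G) :
    ∃ G' : SimpleGraph V, G' ≤ G ∧ Skeletal G' ∧
      G'.chromaticNumber = G.chromaticNumber ∧
      (ClawFree G → ClawFree G') ∧
      (QuasiLine G → QuasiLine G') ∧
      (Gᶜ.Colorable 3 → G'ᶜ.Colorable 3) :=
  stmt3_general G

end Paper
end

section
/- Every skeletal antiprismatic thickening G with independence number α(G) ≥ 3 contains a good triad. -/
open SimpleGraph

namespace Paper

variable {V : Type*} {W : Type*}

/-! ### Auxiliary lemmas for stmt6 -/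

set_option linter.unusedSectionVars false

variable [Fintype V]

/-- The fiber of the thickening map over a base vertex. -/
def fiberF [DecidableEq W] (f : V → W) (w : W) : Finset V :=
  Finset.univ.filter (fun v => f v = w)

lemma mem_fiberF [DecidableEq W] {f : V → W} {w : W} {v : V} :
    v ∈ fiberF f w ↔ f v = w := by simp [fiberF]

lemma partner_unique {M : Set (Sym2 W)} (hm : IsMatchingSet M) {x y z : W}
    (h1 : s(x, y) ∈ M) (h2 : s(x, z) ∈ M) : y = z := by
  by_cases heq : s(x, y) = s(x, z)
  · rcases Sym2.eq_iff.mp heq with ⟨-, h⟩ | ⟨hxz, hyx⟩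
    · exact h
    · exfalso; exact hm.1 _ h1 (Sym2.mk_isDiag_iff.mpr (hyx.symm ▸ hxz ▸ rfl))
  · exact absurd (Sym2.mem_mk_left x z) (hm.2 _ h1 _ h2 heq x (Sym2.mem_mk_left x y))

section Transfer

variable {G : SimpleGraph V} {H : SimpleGraph W} {M : Set (Sym2 W)} {f : V → W}

lemma fiber_adj (ht : IsThickening H M G f) {u v : V} (h : f u = f v) (hne : u ≠ v) :
    G.Adj u v :=
  ht.fibers_clique (f u) ⟨Set.mem_univ u, rfl⟩ ⟨Set.mem_univ v, h.symm⟩ hne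

lemma adj_transfer (ht : IsThickening H M G f) {u v : V} (hne : f u ≠ f v)
    (h : (H.deleteEdges M).Adj (f u) (f v)) : G.Adj u v := by
  rw [SimpleGraph.deleteEdges_adj] at h
  exact ht.adj_of_adj u (Set.mem_univ u) v (Set.mem_univ v) hne h.1 h.2

lemma nonadj_transfer (ht : IsThickening H M G f) {u v : V} (hne : f u ≠ f v)
    (h : ¬G.Adj u v) : ¬(H.deleteEdges M).Adj (f u) (f v) :=
  fun hadj => h (adj_transfer ht hne hadj)

lemma adj_up (ht : IsThickening H M G f) {u v : V} (hne : f u ≠ f v)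
    (h : G.Adj u v) : H.Adj (f u) (f v) := by
  by_contra hc
  exact ht.nonadj_of_nonadj u (Set.mem_univ u) v (Set.mem_univ v) hne hc h

end Transfer


/-- The key structure lemma coming from skeletality: for a matched pair `(x,u)`,
the edges between the two fibers form a complete bipartite graph between
nonempty subsets `A'`, `B'` of the fibers, not both full. -/
lemma struct [DecidableEq W] {G : SimpleGraph V} {H : SimpleGraph W}
    {M : Set (Sym2 W)} {f : V → W} (hM : ChangeableMatching H M)
    (ht : IsThickening H M G f) (hsk : Skeletal G) {x u : W} (hxu : s(x, u) ∈ M) :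
    ∃ A' B' : Finset V, A' ⊆ fiberF f x ∧ B' ⊆ fiberF f u ∧ A'.Nonempty ∧ B'.Nonempty ∧
      (A' ≠ fiberF f x ∨ B' ≠ fiberF f u) ∧
      ∀ a ∈ fiberF f x, ∀ b ∈ fiberF f u, (G.Adj a b ↔ a ∈ A' ∧ b ∈ B') := by
  classical
  obtain ⟨hMe, hmatch, -⟩ := hM
  have hxune : x ≠ u := fun h => hmatch.1 _ hxu (Sym2.mk_isDiag_iff.mpr h)
  set A := fiberF f x with hA
  set B := fiberF f u with hB
  have hcA : ∀ w : W, G.IsClique (↑(fiberF f w) : Set V) := by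
    intro w
    have h2 := ht.fibers_clique w
    have hs : ({v | v ∈ Set.univ ∧ f v = w} : Set V) = ↑(fiberF f w) := by
      ext v; simp [mem_fiberF]
    rwa [hs] at h2
  have hne : ∀ w : W, (fiberF f w).Nonempty := by
    intro w
    obtain ⟨v, -, hv⟩ := ht.fibers_nonempty w (Set.mem_univ w)
    exact ⟨v, mem_fiberF.mpr hv⟩
  have hdisj : Disjoint A B := by
    rw [Finset.disjoint_left]
    intro v hv hv'
    exact hxune ((mem_fiberF.mp hv).symm.trans (mem_fiberF.mp hv'))
  obtain ⟨p, -, q, -, hfp, hfq, hpq⟩ := ht.semi_adj x (Set.mem_univ x) u (Set.mem_univ u) hxu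
  obtain ⟨p0, -, q0, -, hfp0, hfq0, hpq0⟩ :=
    ht.semi_nonadj x (Set.mem_univ x) u (Set.mem_univ u) hxu
  have hpA : p ∈ A := mem_fiberF.mpr hfp
  have hqB : q ∈ B := mem_fiberF.mpr hfq
  have hp0A : p0 ∈ A := mem_fiberF.mpr hfp0
  have hq0B : q0 ∈ B := mem_fiberF.mpr hfq0
  -- (A, B) is a homogeneous pair of cliques
  have hcard : 3 ≤ A.card + B.card := by
    by_contra hlt
    push_neg at hlt
    have h1 : 1 ≤ A.card := Finset.card_pos.mpr (hne x)
    have h2 : 1 ≤ B.card := Finset.card_pos.mpr (hne u)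
    have hA1 : A.card = 1 := by omega
    have hB1 : B.card = 1 := by omega
    obtain ⟨a, ha⟩ := Finset.card_eq_one.mp hA1
    obtain ⟨b, hb⟩ := Finset.card_eq_one.mp hB1
    rw [ha, Finset.mem_singleton] at hpA hp0A
    rw [hb, Finset.mem_singleton] at hqB hq0B
    rw [hpA, hqB] at hpq
    rw [hp0A, hq0B] at hpq0
    exact hpq0 hpq
  have hhom : IsHomPair G A B := by
    refine ⟨Set.subset_univ _, Set.subset_univ _, hcA x, hcA u, hne x, hne u, hdisj, hcard, ?_⟩
    intro v _ hvA hvB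
    have hvx : f v ≠ x := fun h => hvA (mem_fiberF.mpr h)
    have hvu : f v ≠ u := fun h => hvB (mem_fiberF.mpr h)
    constructor
    · by_cases hH : H.Adj (f v) x
      · left
        intro a haA
        have hnM : s(f v, x) ∉ M := by
          intro hmem
          have : u = f v := partner_unique hmatch hxu (Sym2.eq_swap ▸ hmem)
          exact hvu this.symm
        have hfa := mem_fiberF.mp haA
        exact ht.adj_of_adj v (Set.mem_univ v) a (Set.mem_univ a)
          (by rw [hfa]; exact hvx) (hfa ▸ hH) (hfa ▸ hnM)
      · right
        intro a haA
        have hfa := mem_fiberF.mp haA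
        exact ht.nonadj_of_nonadj v (Set.mem_univ v) a (Set.mem_univ a)
          (by rw [hfa]; exact hvx) (hfa ▸ hH)
    · by_cases hH : H.Adj (f v) u
      · left
        intro b hbB
        have hnM : s(f v, u) ∉ M := by
          intro hmem
          have : x = f v := partner_unique hmatch (Sym2.eq_swap ▸ hxu) (Sym2.eq_swap ▸ hmem)
          exact hvx this.symm
        have hfb := mem_fiberF.mp hbB
        exact ht.adj_of_adj v (Set.mem_univ v) b (Set.mem_univ b)
          (by rw [hfb]; exact hvu) (hfb ▸ hH) (hfb ▸ hnM)
      · right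
        intro b hbB
        have hfb := mem_fiberF.mp hbB
        exact ht.nonadj_of_nonadj v (Set.mem_univ v) b (Set.mem_univ b)
          (by rw [hfb]; exact hvu) (hfb ▸ hH)
  have hskp : IsSkeletalPair G A B := hsk A B hhom
  -- a maximum clique of G[A ∪ B]
  set SS : Set ℕ := {n | ∃ s : Finset V, ↑s ⊆ (↑A ∪ ↑B : Set V) ∧ G.IsNClique n s} with hSS
  have hSSne : SS.Nonempty := ⟨0, ∅, by simp, by simp [SimpleGraph.isNClique_empty]⟩
  have hbdd : ∀ (G' : SimpleGraph V), BddAbove {n | ∃ s : Finset V,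
      ↑s ⊆ (↑A ∪ ↑B : Set V) ∧ G'.IsNClique n s} := by
    intro G'
    refine ⟨(A ∪ B).card, ?_⟩
    rintro n ⟨s, hs, hcl⟩
    rw [← hcl.2]
    exact Finset.card_le_card (by rwa [← Finset.coe_subset, Finset.coe_union])
  have hself : cliqueNumOn G (↑A ∪ ↑B) = sSup SS := rfl
  obtain ⟨K, hKsub, hKcl⟩ := Nat.sSup_mem hSSne (hbdd G)
  have hchar : ∀ a ∈ A, ∀ b ∈ B, (G.Adj a b ↔ a ∈ A ∩ K ∧ b ∈ B ∩ K) := by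
    intro a ha b hb
    constructor
    · intro hadj
      by_contra hcon
      have hKcl' : (G.deleteEdges {s(a, b)}).IsNClique (sSup SS) K := by
        refine ⟨?_, hKcl.2⟩
        intro p hp q hq hpqne
        refine (SimpleGraph.deleteEdges_adj).mpr ⟨hKcl.1 hp hq hpqne, ?_⟩
        intro hmem
        rw [Set.mem_singleton_iff] at hmem
        rcases Sym2.eq_iff.mp hmem with ⟨hpa, hqb⟩ | ⟨hpb, hqa⟩
        · exact hcon ⟨Finset.mem_inter.mpr ⟨ha, by exact_mod_cast hpa ▸ hp⟩,
            Finset.mem_inter.mpr ⟨hb, by exact_mod_cast hqb ▸ hq⟩⟩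
        · exact hcon ⟨Finset.mem_inter.mpr ⟨ha, by exact_mod_cast hqa ▸ hq⟩,
            Finset.mem_inter.mpr ⟨hb, by exact_mod_cast hpb ▸ hp⟩⟩
      have hle : sSup SS ≤ cliqueNumOn (G.deleteEdges {s(a, b)}) (↑A ∪ ↑B) :=
        le_csSup (hbdd _) ⟨K, hKsub, hKcl'⟩
      have hlt := hskp a ha b hb hadj
      rw [hself] at hlt
      omega
    · rintro ⟨haK, hbK⟩
      rw [Finset.mem_inter] at haK hbK
      exact hKcl.1 (by exact_mod_cast haK.2) (by exact_mod_cast hbK.2)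
        (Finset.disjoint_left.mp hdisj ha ∘ (· ▸ hb))
  refine ⟨A ∩ K, B ∩ K, Finset.inter_subset_left, Finset.inter_subset_left, ?_, ?_, ?_, hchar⟩
  · exact ⟨p, ((hchar p hpA q hqB).mp hpq).1⟩
  · exact ⟨q, ((hchar p hpA q hqB).mp hpq).2⟩
  · by_contra hcon
    push_neg at hcon
    exact hpq0 ((hchar p0 hp0A q0 hq0B).mpr ⟨by rw [hcon.1]; exact hp0A, by rw [hcon.2]; exact hq0B⟩)


lemma nbhd_subset [DecidableEq W] {G : SimpleGraph V} {H : SimpleGraph W}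
    {M : Set (Sym2 W)} {f : V → W} (hm : IsMatchingSet M) (ht : IsThickening H M G f)
    {x : W} {a v : V} (hfa : f a = x) (hfv : f v = x)
    (hcond : (∀ u, s(x, u) ∉ M) ∨ ∃ u, ∃ A' B' : Finset V, s(x, u) ∈ M ∧
      (∀ p ∈ fiberF f x, ∀ q ∈ fiberF f u, (G.Adj p q ↔ p ∈ A' ∧ q ∈ B')) ∧
      (a ∈ A' ∨ v ∉ A')) :
    closedNbhd G v ⊆ closedNbhd G a := by
  by_cases hva : v = a
  · subst hva; exact le_refl _
  intro w hw
  rcases Set.mem_insert_iff.mp hw with hwv | hadj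
  · subst hwv
    exact Set.mem_insert_iff.mpr (Or.inr (fiber_adj ht (hfa.trans hfv.symm) (Ne.symm hva)))
  by_cases hwa : w = a
  · exact hwa ▸ Set.mem_insert _ _
  have hadj' : G.Adj v w := hadj
  refine Set.mem_insert_iff.mpr (Or.inr ?_)
  show G.Adj a w
  by_cases hwx : f w = x
  · exact fiber_adj ht (hfa.trans hwx.symm) (Ne.symm hwa)
  by_cases hMx : s(x, f w) ∈ M
  · rcases hcond with hforall | ⟨u, A', B', hu, hchar, hd⟩
    · exact absurd hMx (hforall (f w))
    · have hwu : f w = u := (partner_unique hm hu hMx).symm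
      have hvc := (hchar v (mem_fiberF.mpr hfv) w (mem_fiberF.mpr hwu)).mp hadj'
      have haA' : a ∈ A' := hd.resolve_right (fun h => h hvc.1)
      exact (hchar a (mem_fiberF.mpr hfa) w (mem_fiberF.mpr hwu)).mpr ⟨haA', hvc.2⟩
  · have hne1 : f v ≠ f w := by rw [hfv]; exact fun h => hwx h.symm
    have hH := adj_up ht hne1 hadj'
    rw [hfv] at hH
    exact ht.adj_of_adj a (Set.mem_univ a) w (Set.mem_univ w)
      (by rw [hfa]; exact fun h => hwx h.symm) (hfa ▸ hH) (by rw [hfa]; exact hMx)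

lemma goodness_of_subset [DecidableEq V] {G : SimpleGraph V} {T : Finset V} {v t : V}
    (htT : t ∈ T) (hsub : closedNbhd G v ⊆ closedNbhd G t) :
    (∃ t1 ∈ T, ∃ t2 ∈ T, t1 ≠ t2 ∧ G.Adj v t1 ∧ G.Adj v t2) ∨
    (∃ t' ∈ T, closedNbhdOn G Set.univ v = closedNbhdOn G Set.univ t') ∨
    (∃ t' ∈ T, closedNbhdOn G Set.univ v ⊂ closedNbhdOn G Set.univ t') := by
  have he : ∀ w : V, closedNbhdOn G Set.univ w = closedNbhd G w := fun w => Set.univ_inter _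
  rcases hsub.ssubset_or_eq with h | h
  · exact Or.inr (Or.inr ⟨t, htT, by rw [he, he]; exact h⟩)
  · exact Or.inr (Or.inl ⟨t, htT, by rw [he, he]; exact h⟩)

lemma triad_of_three {V' : Type*} [DecidableEq V'] {G : SimpleGraph V'} {a b c : V'}
    (hab : ¬G.Adj a b) (hac : ¬G.Adj a c) (hbc : ¬G.Adj b c)
    (h1 : a ≠ b) (h2 : a ≠ c) (h3 : b ≠ c) :
    IsTriad G ({a, b, c} : Finset V') := by
  constructor
  · rw [Finset.card_eq_three]; exact ⟨a, b, c, h1, h2, h3, rfl⟩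
  · intro p hp q hq hne
    simp only [Finset.mem_insert, Finset.mem_singleton] at hp hq
    rcases hp with rfl | rfl | rfl <;> rcases hq with rfl | rfl | rfl <;>
      first
        | exact absurd rfl hne
        | exact hab | exact hac | exact hbc
        | exact fun h => hab h.symm | exact fun h => hac h.symm | exact fun h => hbc h.symm

lemma two_nbrs [DecidableEq V] [DecidableEq W] {G : SimpleGraph V} {H : SimpleGraph W}
    {M : Set (Sym2 W)} {f : V → W} (ht : IsThickening H M G f)
    (hanti : Antiprismatic (H.deleteEdges M)) {a b c v : V}
    (hab : ¬G.Adj a b) (hac : ¬G.Adj a c) (hbc : ¬G.Adj b c)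
    (hxy : f a ≠ f b) (hxz : f a ≠ f c) (hyz : f b ≠ f c)
    (hvx : f v ≠ f a) (hvy : f v ≠ f b) (hvz : f v ≠ f c) :
    ∃ t1 ∈ ({a, b, c} : Finset V), ∃ t2 ∈ ({a, b, c} : Finset V),
      t1 ≠ t2 ∧ G.Adj v t1 ∧ G.Adj v t2 := by
  have htriad : IsTriad (H.deleteEdges M) ({f a, f b, f c} : Finset W) :=
    triad_of_three (nonadj_transfer ht hxy hab) (nonadj_transfer ht hxz hac)
      (nonadj_transfer ht hyz hbc) hxy hxz hyz
  obtain ⟨t, htT, -, hall⟩ := hanti _ htriad (f v)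
    (by simp only [Finset.mem_insert, Finset.mem_singleton]; push_neg
        exact ⟨hvx, hvy, hvz⟩)
  have hane : a ≠ b := fun h => hxy (congrArg f h)
  have hane2 : a ≠ c := fun h => hxz (congrArg f h)
  have hane3 : b ≠ c := fun h => hyz (congrArg f h)
  simp only [Finset.mem_insert, Finset.mem_singleton] at htT
  rcases htT with rfl | rfl | rfl
  · exact ⟨b, by simp, c, by simp, hane3,
      adj_transfer ht hvy (hall (f b) (by simp) hxy.symm),
      adj_transfer ht hvz (hall (f c) (by simp) hxz.symm)⟩
  · exact ⟨a, by simp, c, by simp, hane2,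
      adj_transfer ht hvx (hall (f a) (by simp) hxy),
      adj_transfer ht hvz (hall (f c) (by simp) hyz.symm)⟩
  · exact ⟨a, by simp, b, by simp, hane,
      adj_transfer ht hvx (hall (f a) (by simp) hxz),
      adj_transfer ht hvy (hall (f b) (by simp) hyz)⟩

lemma choose_rep [DecidableEq W] {G : SimpleGraph V} {H : SimpleGraph W}
    {M : Set (Sym2 W)} {f : V → W} (hM : ChangeableMatching H M)
    (ht : IsThickening H M G f) (hsk : Skeletal G) (w : W) (d : V) (hd : f d = w) :
    ∃ r : V, f r = w ∧ ((∀ u, s(w, u) ∉ M) ∨ ∃ u, ∃ A' B' : Finset V, s(w, u) ∈ M ∧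
      (∀ p ∈ fiberF f w, ∀ q ∈ fiberF f u, (G.Adj p q ↔ p ∈ A' ∧ q ∈ B')) ∧ r ∈ A') := by
  by_cases hm : ∃ u, s(w, u) ∈ M
  · obtain ⟨u, hu⟩ := hm
    obtain ⟨A', B', hsubA, -, ⟨r, hr⟩, -, -, hchar⟩ := struct hM ht hsk hu
    exact ⟨r, mem_fiberF.mp (hsubA hr), Or.inr ⟨u, A', B', hu, hchar, hr⟩⟩
  · push_neg at hm
    exact ⟨d, hd, Or.inl hm⟩

lemma aux [DecidableEq V] [DecidableEq W] {G : SimpleGraph V} {H : SimpleGraph W}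
    {M : Set (Sym2 W)} {f : V → W} (hM : ChangeableMatching H M)
    (ht : IsThickening H M G f) (hsk : Skeletal G)
    {a0 b0 c0 : V} (hab0 : ¬G.Adj a0 b0) (hac0 : ¬G.Adj a0 c0) (hbc0 : ¬G.Adj b0 c0)
    (hab' : a0 ≠ b0) (hac' : a0 ≠ c0) (hbc' : b0 ≠ c0)
    (hno1 : s(f a0, f c0) ∉ M) (hno2 : s(f b0, f c0) ∉ M) :
    ∃ T : Finset V, GoodTriad G T := by
  have himg_ab : f a0 ≠ f b0 := fun h => hab0 (fiber_adj ht h hab')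
  have himg_ac : f a0 ≠ f c0 := fun h => hac0 (fiber_adj ht h hac')
  have himg_bc : f b0 ≠ f c0 := fun h => hbc0 (fiber_adj ht h hbc')
  have hanti : Antiprismatic (H.deleteEdges M) := hM.2.2 M (Set.Subset.refl M)
  have nH'xy := nonadj_transfer ht himg_ab hab0
  have nH'xz := nonadj_transfer ht himg_ac hac0
  have nH'yz := nonadj_transfer ht himg_bc hbc0
  have hHxz : ¬H.Adj (f a0) (f c0) :=
    fun h => nH'xz ((SimpleGraph.deleteEdges_adj).mpr ⟨h, hno1⟩)
  have hHyz : ¬H.Adj (f b0) (f c0) :=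
    fun h => nH'yz ((SimpleGraph.deleteEdges_adj).mpr ⟨h, hno2⟩)
  have anticomp : ∀ {w1 w2 : W}, ¬H.Adj w1 w2 → w1 ≠ w2 →
      ∀ p q : V, f p = w1 → f q = w2 → ¬G.Adj p q := by
    intro w1 w2 hn hne p q hp hq h
    have := adj_up ht (by rw [hp, hq]; exact hne) h
    rw [hp, hq] at this
    exact hn this
  obtain ⟨c, hfc, hccond⟩ := choose_rep hM ht hsk (f c0) c0 rfl
  have hccond' : (∀ u, s(f c0, u) ∉ M) ∨ ∀ v : V, ∃ u, ∃ A' B' : Finset V,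
      s(f c0, u) ∈ M ∧
      (∀ p ∈ fiberF f (f c0), ∀ q ∈ fiberF f u, (G.Adj p q ↔ p ∈ A' ∧ q ∈ B')) ∧
      (c ∈ A' ∨ v ∉ A') :=
    hccond.imp id (fun ⟨u, A', B', h1, h2, h3⟩ v => ⟨u, A', B', h1, h2, Or.inl h3⟩)
  by_cases hxyM : s(f a0, f b0) ∈ M
  · -- the matched pair is inside the triad
    obtain ⟨A', B', hA'sub, hB'sub, hA'ne, hB'ne, hfull, hchar⟩ := struct hM ht hsk hxyM
    have hchar' : ∀ p ∈ fiberF f (f b0), ∀ q ∈ fiberF f (f a0),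
        (G.Adj p q ↔ p ∈ B' ∧ q ∈ A') := by
      intro p hp q hq
      constructor
      · intro h
        have := (hchar q hq p hp).mp h.symm
        exact ⟨this.2, this.1⟩
      · intro h
        exact ((hchar q hq p hp).mpr ⟨h.2, h.1⟩).symm
    rcases hfull with hAfull | hBfull
    · -- A' is not the whole fiber of x : pick b ∈ B', a outside A'
      obtain ⟨b, hbB'⟩ := hB'ne
      have hfb : f b = f b0 := mem_fiberF.mp (hB'sub hbB')
      obtain ⟨a, haF, haA'⟩ : ∃ a ∈ fiberF f (f a0), a ∉ A' := by
        by_contra hcon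
        push_neg at hcon
        exact hAfull (Finset.Subset.antisymm hA'sub hcon)
      have hfa : f a = f a0 := mem_fiberF.mp haF
      have hab : ¬G.Adj a b := fun h => haA' ((hchar a haF b (hB'sub hbB')).mp h).1
      have hac : ¬G.Adj a c := anticomp hHxz himg_ac a c hfa hfc
      have hbc : ¬G.Adj b c := anticomp hHyz himg_bc b c hfb hfc
      have hane : a ≠ b := fun h => himg_ab (hfa ▸ hfb ▸ congrArg f h)
      have hane2 : a ≠ c := fun h => himg_ac (hfa ▸ hfc ▸ congrArg f h)
      have hane3 : b ≠ c := fun h => himg_bc (hfb ▸ hfc ▸ congrArg f h)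
      refine ⟨{a, b, c}, Set.subset_univ _,
        triad_of_three hab hac hbc hane hane2 hane3, ?_⟩
      intro v _ hvT
      simp only [Finset.mem_insert, Finset.mem_singleton] at hvT
      push_neg at hvT
      by_cases hvx : f v = f a0
      · by_cases hvA' : v ∈ A'
        · refine Or.inl ⟨a, by simp, b, by simp, hane, ?_, ?_⟩
          · exact fiber_adj ht (hvx.trans hfa.symm) hvT.1
          · exact (hchar v (mem_fiberF.mpr hvx) b (hB'sub hbB')).mpr ⟨hvA', hbB'⟩
        · exact goodness_of_subset (by simp) (nbhd_subset hM.2.1 ht hfa hvx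
            (Or.inr ⟨f b0, A', B', hxyM, hchar, Or.inr hvA'⟩))
      · by_cases hvy : f v = f b0
        · exact goodness_of_subset (t := b) (by simp) (nbhd_subset hM.2.1 ht hfb hvy
            (Or.inr ⟨f a0, B', A', Sym2.eq_swap ▸ hxyM, hchar', Or.inl hbB'⟩))
        · by_cases hvz : f v = f c0
          · exact goodness_of_subset (t := c) (by simp) (nbhd_subset hM.2.1 ht hfc hvz
              (hccond'.imp id (fun h => h v)))
          · exact Or.inl (two_nbrs ht hanti hab hac hbc
              (by rw [hfa, hfb]; exact himg_ab) (by rw [hfa, hfc]; exact himg_ac)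
              (by rw [hfb, hfc]; exact himg_bc)
              (by rw [hfa]; exact hvx) (by rw [hfb]; exact hvy) (by rw [hfc]; exact hvz))
    · -- B' is not the whole fiber of y : pick a ∈ A', b outside B'
      obtain ⟨a, haA'⟩ := hA'ne
      have hfa : f a = f a0 := mem_fiberF.mp (hA'sub haA')
      obtain ⟨b, hbF, hbB'⟩ : ∃ b ∈ fiberF f (f b0), b ∉ B' := by
        by_contra hcon
        push_neg at hcon
        exact hBfull (Finset.Subset.antisymm hB'sub hcon)
      have hfb : f b = f b0 := mem_fiberF.mp hbF
      have hab : ¬G.Adj a b := fun h => hbB' ((hchar a (hA'sub haA') b hbF).mp h).2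
      have hac : ¬G.Adj a c := anticomp hHxz himg_ac a c hfa hfc
      have hbc : ¬G.Adj b c := anticomp hHyz himg_bc b c hfb hfc
      have hane : a ≠ b := fun h => himg_ab (hfa ▸ hfb ▸ congrArg f h)
      have hane2 : a ≠ c := fun h => himg_ac (hfa ▸ hfc ▸ congrArg f h)
      have hane3 : b ≠ c := fun h => himg_bc (hfb ▸ hfc ▸ congrArg f h)
      refine ⟨{a, b, c}, Set.subset_univ _,
        triad_of_three hab hac hbc hane hane2 hane3, ?_⟩
      intro v _ hvT
      simp only [Finset.mem_insert, Finset.mem_singleton] at hvT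
      push_neg at hvT
      by_cases hvx : f v = f a0
      · exact goodness_of_subset (t := a) (by simp) (nbhd_subset hM.2.1 ht hfa hvx
          (Or.inr ⟨f b0, A', B', hxyM, hchar, Or.inl haA'⟩))
      · by_cases hvy : f v = f b0
        · by_cases hvB' : v ∈ B'
          · refine Or.inl ⟨a, by simp, b, by simp, hane, ?_, ?_⟩
            · exact ((hchar a (hA'sub haA') v (mem_fiberF.mpr hvy)).mpr ⟨haA', hvB'⟩).symm
            · exact fiber_adj ht (hvy.trans hfb.symm) hvT.2.1
          · exact goodness_of_subset (t := b) (by simp) (nbhd_subset hM.2.1 ht hfb hvy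
              (Or.inr ⟨f a0, B', A', Sym2.eq_swap ▸ hxyM, hchar', Or.inr hvB'⟩))
        · by_cases hvz : f v = f c0
          · exact goodness_of_subset (t := c) (by simp) (nbhd_subset hM.2.1 ht hfc hvz
              (hccond'.imp id (fun h => h v)))
          · exact Or.inl (two_nbrs ht hanti hab hac hbc
              (by rw [hfa, hfb]; exact himg_ab) (by rw [hfa, hfc]; exact himg_ac)
              (by rw [hfb, hfc]; exact himg_bc)
              (by rw [hfa]; exact hvx) (by rw [hfb]; exact hvy) (by rw [hfc]; exact hvz))
  · -- no matched pair inside the triad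
    have hHxy : ¬H.Adj (f a0) (f b0) :=
      fun h => nH'xy ((SimpleGraph.deleteEdges_adj).mpr ⟨h, hxyM⟩)
    obtain ⟨a, hfa, hacond⟩ := choose_rep hM ht hsk (f a0) a0 rfl
    obtain ⟨b, hfb, hbcond⟩ := choose_rep hM ht hsk (f b0) b0 rfl
    have hacond' : (∀ u, s(f a0, u) ∉ M) ∨ ∀ v : V, ∃ u, ∃ A' B' : Finset V,
        s(f a0, u) ∈ M ∧
        (∀ p ∈ fiberF f (f a0), ∀ q ∈ fiberF f u, (G.Adj p q ↔ p ∈ A' ∧ q ∈ B')) ∧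
        (a ∈ A' ∨ v ∉ A') :=
      hacond.imp id (fun ⟨u, A', B', h1, h2, h3⟩ v => ⟨u, A', B', h1, h2, Or.inl h3⟩)
    have hbcond' : (∀ u, s(f b0, u) ∉ M) ∨ ∀ v : V, ∃ u, ∃ A' B' : Finset V,
        s(f b0, u) ∈ M ∧
        (∀ p ∈ fiberF f (f b0), ∀ q ∈ fiberF f u, (G.Adj p q ↔ p ∈ A' ∧ q ∈ B')) ∧
        (b ∈ A' ∨ v ∉ A') :=
      hbcond.imp id (fun ⟨u, A', B', h1, h2, h3⟩ v => ⟨u, A', B', h1, h2, Or.inl h3⟩)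
    have hab : ¬G.Adj a b := anticomp hHxy himg_ab a b hfa hfb
    have hac : ¬G.Adj a c := anticomp hHxz himg_ac a c hfa hfc
    have hbc : ¬G.Adj b c := anticomp hHyz himg_bc b c hfb hfc
    have hane : a ≠ b := fun h => himg_ab (hfa ▸ hfb ▸ congrArg f h)
    have hane2 : a ≠ c := fun h => himg_ac (hfa ▸ hfc ▸ congrArg f h)
    have hane3 : b ≠ c := fun h => himg_bc (hfb ▸ hfc ▸ congrArg f h)
    refine ⟨{a, b, c}, Set.subset_univ _,
      triad_of_three hab hac hbc hane hane2 hane3, ?_⟩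
    intro v _ hvT
    by_cases hvx : f v = f a0
    · exact goodness_of_subset (t := a) (by simp) (nbhd_subset hM.2.1 ht hfa hvx
        (hacond'.imp id (fun h => h v)))
    · by_cases hvy : f v = f b0
      · exact goodness_of_subset (t := b) (by simp) (nbhd_subset hM.2.1 ht hfb hvy
          (hbcond'.imp id (fun h => h v)))
      · by_cases hvz : f v = f c0
        · exact goodness_of_subset (t := c) (by simp) (nbhd_subset hM.2.1 ht hfc hvz
            (hccond'.imp id (fun h => h v)))
        · exact Or.inl (two_nbrs ht hanti hab hac hbc
            (by rw [hfa, hfb]; exact himg_ab) (by rw [hfa, hfc]; exact himg_ac)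
            (by rw [hfb, hfc]; exact himg_bc)
            (by rw [hfa]; exact hvx) (by rw [hfb]; exact hvy) (by rw [hfc]; exact hvz))

theorem stmt6 {V W : Type*} [Fintype V] (G : SimpleGraph V) (H : SimpleGraph W)
    (M : Set (Sym2 W)) (f : V → W)
    (hH : Antiprismatic H) (hM : ChangeableMatching H M) (ht : IsThickening H M G f)
    (hsk : Skeletal G) (T0 : Finset V) (hT0 : IsTriad G T0) :
    ∃ T : Finset V, GoodTriad G T := by
  classical
  obtain ⟨hcard, hnadj⟩ := hT0
  obtain ⟨a0, b0, c0, hab', hac', hbc', rfl⟩ := Finset.card_eq_three.mp hcard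
  have hma : a0 ∈ ({a0, b0, c0} : Finset V) := by simp
  have hmb : b0 ∈ ({a0, b0, c0} : Finset V) := by simp
  have hmc : c0 ∈ ({a0, b0, c0} : Finset V) := by simp
  have hab0 : ¬G.Adj a0 b0 := hnadj a0 hma b0 hmb hab'
  have hac0 : ¬G.Adj a0 c0 := hnadj a0 hma c0 hmc hac'
  have hbc0 : ¬G.Adj b0 c0 := hnadj b0 hmb c0 hmc hbc'
  have himg_ab : f a0 ≠ f b0 := fun h => hab0 (fiber_adj ht h hab')
  have himg_ac : f a0 ≠ f c0 := fun h => hac0 (fiber_adj ht h hac')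
  have himg_bc : f b0 ≠ f c0 := fun h => hbc0 (fiber_adj ht h hbc')
  have hmatch : IsMatchingSet M := hM.2.1
  by_cases h1 : s(f a0, f b0) ∈ M
  · -- a0b0 matched: then neither a0c0 nor b0c0 can be in M
    have hno1 : s(f a0, f c0) ∉ M :=
      fun h => himg_bc (partner_unique hmatch h1 h)
    have hno2 : s(f b0, f c0) ∉ M :=
      fun h => himg_ac (partner_unique hmatch (Sym2.eq_swap ▸ h1) h)
    exact aux hM ht hsk hab0 hac0 hbc0 hab' hac' hbc' hno1 hno2
  · by_cases h2 : s(f a0, f c0) ∈ M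
    · -- roles: (a0, c0, b0)
      have hno2 : s(f c0, f b0) ∉ M :=
        fun h => himg_ab (partner_unique hmatch (Sym2.eq_swap ▸ h2) h)
      exact aux hM ht hsk hac0 hab0 (fun h => hbc0 h.symm) hac' hab' (Ne.symm hbc')
        h1 hno2
    · by_cases h3 : s(f b0, f c0) ∈ M
      · -- roles: (b0, c0, a0)
        exact aux hM ht hsk hbc0 (fun h => hab0 h.symm) (fun h => hac0 h.symm)
          hbc' (Ne.symm hab') (Ne.symm hac')
          (fun h => h1 (Sym2.eq_swap ▸ h)) (fun h => h2 (Sym2.eq_swap ▸ h))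
      · exact aux hM ht hsk hab0 hac0 hbc0 hab' hac' hbc' h2 h3


end Paper
end

section
/- If T is a good triad in a finite simple graph G, then γ_ℓ(G − T) ≤ γ_ℓ(G) − 1. -/
open SimpleGraph

namespace Paper

variable {V : Type*} {W : Type*}

section Stmt8Aux

variable {V : Type*} [Fintype V]

lemma degree'_induce (G : SimpleGraph V) (S : Set V) (v : S) :
    degree' (G.induce S) v = (G.neighborSet ↑v ∩ S).ncard := by
  classical
  have himg : Subtype.val '' ((G.induce S).neighborSet v) = G.neighborSet ↑v ∩ S := by
    ext x
    constructor
    · rintro ⟨y, hy, rfl⟩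
      exact ⟨hy, y.2⟩
    · rintro ⟨hadj, hxS⟩
      exact ⟨⟨x, hxS⟩, hadj, rfl⟩
  rw [degree', ← Set.ncard_image_of_injective _ Subtype.val_injective, himg]

lemma isNClique_image [DecidableEq V] {G : SimpleGraph V} {S : Set V} {n : ℕ} {s : Finset S}
    (h : (G.induce S).IsNClique n s) :
    G.IsNClique n (s.image Subtype.val) := by
  classical
  constructor
  · intro a ha b hb hab
    simp only [Finset.coe_image, Set.mem_image, Finset.mem_coe] at ha hb
    obtain ⟨a', ha', rfl⟩ := ha
    obtain ⟨b', hb', rfl⟩ := hb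
    have hne : a' ≠ b' := fun e => hab (by rw [e])
    exact h.1 (Finset.mem_coe.mpr ha') (Finset.mem_coe.mpr hb') hne
  · rw [Finset.card_image_of_injective _ Subtype.val_injective, h.2]

lemma bddAbove_omegaSet (G : SimpleGraph V) (v : V) :
    BddAbove {n | ∃ s : Finset V, G.IsNClique n s ∧ v ∈ s} :=
  ⟨Fintype.card V, fun n hn => by
    obtain ⟨s, hs, -⟩ := hn
    exact hs.2 ▸ s.card_le_univ⟩

lemma one_le_omegaAt (G : SimpleGraph V) (t : V) : 1 ≤ omegaAt G t := by
  apply le_csSup (bddAbove_omegaSet G t)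
  exact ⟨{t}, by simp [SimpleGraph.isNClique_iff], by simp⟩

end Stmt8Aux

theorem stmt8 {V : Type*} [Fintype V] (G : SimpleGraph V) (T : Finset V)
    (hT : GoodTriad G T) :
    gammaLocal (G.induce {v : V | v ∉ T}) ≤ gammaLocal G - 1 := by
  classical
  set S : Set V := {v : V | v ∉ T} with hS
  obtain ⟨-, ⟨-, -⟩, hgood⟩ := hT
  have hbdd : BddAbove {n | ∃ v : V, n = gammaLocalAt G v} :=
    Set.Finite.bddAbove ((Set.finite_range (gammaLocalAt G)).subset
      (by rintro n ⟨x, rfl⟩; exact ⟨x, rfl⟩))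
  rw [gammaLocal]
  apply csSup_le'
  rintro n ⟨v, rfl⟩
  have hvT : (↑v : V) ∉ T := v.2
  suffices h : ∃ w : V, gammaLocalAt (G.induce S) v + 1 ≤ gammaLocalAt G w by
    obtain ⟨w, hw⟩ := h
    have hle : gammaLocalAt G w ≤ gammaLocal G := le_csSup hbdd ⟨w, rfl⟩
    omega
  have hdeg : degree' (G.induce S) v = (G.neighborSet ↑v ∩ S).ncard := degree'_induce G S v
  -- the case of a twin or trump
  have main : ∀ t ∈ T, closedNbhd G ↑v ⊆ closedNbhd G t →
      ∃ w : V, gammaLocalAt (G.induce S) v + 1 ≤ gammaLocalAt G w := by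
    intro t htT hsubset
    have hvt : (↑v : V) ≠ t := fun h => hvT (h ▸ htT)
    have hvmem : (↑v : V) ∈ closedNbhd G t := hsubset (Set.mem_insert _ _)
    have hadj : G.Adj t ↑v := by
      rcases hvmem with h | h
      · exact absurd h hvt
      · exact h
    have htmem : t ∈ G.neighborSet ↑v := hadj.symm
    have hsingle : G.neighborSet ↑v ∩ S ⊆ G.neighborSet ↑v \ {t} := by
      rintro x ⟨hx1, hx2⟩
      refine ⟨hx1, fun h => ?_⟩
      rw [Set.mem_singleton_iff] at h
      exact hx2 (h ▸ htT)
    have hd1 : (G.neighborSet ↑v \ {t}).ncard = degree' G ↑v - 1 := by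
      rw [Set.ncard_diff (Set.singleton_subset_iff.mpr htmem) (Set.toFinite _),
        Set.ncard_singleton]
      rfl
    have hd2 : 1 ≤ degree' G ↑v := by
      have h := Set.ncard_le_ncard (Set.singleton_subset_iff.mpr htmem) (Set.toFinite _)
      rwa [Set.ncard_singleton] at h
    have hdle : degree' (G.induce S) v ≤ degree' G ↑v - 1 := by
      rw [hdeg, ← hd1]
      exact Set.ncard_le_ncard hsingle (Set.toFinite _)
    have hdvt : degree' G ↑v ≤ degree' G t := by
      have h1 : (closedNbhd G ↑v).ncard = degree' G ↑v + 1 := by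
        rw [closedNbhd, Set.ncard_insert_of_notMem (by simp) (Set.toFinite _)]
        rfl
      have h2 : (closedNbhd G t).ncard = degree' G t + 1 := by
        rw [closedNbhd, Set.ncard_insert_of_notMem (by simp) (Set.toFinite _)]
        rfl
      have h3 := Set.ncard_le_ncard hsubset (Set.toFinite _)
      omega
    have homega : omegaAt (G.induce S) v ≤ omegaAt G t - 1 := by
      apply csSup_le'
      rintro n ⟨s, hs, hvs⟩
      have himg := isNClique_image hs
      have htnot : t ∉ s.image Subtype.val := by
        simp only [Finset.mem_image]
        rintro ⟨x, -, rfl⟩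
        exact x.2 htT
      have hmem : n + 1 ≤ omegaAt G t := by
        apply le_csSup (bddAbove_omegaSet G t)
        refine ⟨insert t (s.image Subtype.val), ?_, Finset.mem_insert_self _ _⟩
        have hcl : G.IsNClique (n + 1) (insert t (s.image Subtype.val)) := by
          apply himg.insert
          intro b hb
          simp only [Finset.mem_image] at hb
          obtain ⟨x, hx, rfl⟩ := hb
          have hbcl : (↑x : V) ∈ closedNbhd G ↑v := by
            by_cases hxv : x = v
            · subst hxv; exact Set.mem_insert _ _
            · have : (G.induce S).Adj v x :=
                hs.1 (Finset.mem_coe.mpr hvs) (Finset.mem_coe.mpr hx) (fun e => hxv e.symm)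
              exact Set.mem_insert_of_mem _ this
          have hbt : (↑x : V) ∈ closedNbhd G t := hsubset hbcl
          rcases hbt with h | h
          · exact absurd (h ▸ htT) x.2
          · exact h
        exact hcl
      have h1 := one_le_omegaAt G t
      omega
    refine ⟨t, ?_⟩
    have h1le : 1 ≤ omegaAt G t := one_le_omegaAt G t
    unfold gammaLocalAt
    omega
  rcases hgood ↑v trivial hvT with ⟨t1, ht1, t2, ht2, hne, ha1, ha2⟩ | ⟨t, ht, heq⟩ | ⟨t, ht, hsub⟩
  · -- two neighbours in T
    refine ⟨↑v, ?_⟩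
    have hpair : ({t1, t2} : Set V) ⊆ G.neighborSet ↑v := by
      rintro x (rfl | rfl)
      · exact ha1
      · exact ha2
    have hsub2 : G.neighborSet ↑v ∩ S ⊆ G.neighborSet ↑v \ {t1, t2} := by
      rintro x ⟨hx1, hx2⟩
      refine ⟨hx1, fun h => ?_⟩
      rcases h with rfl | h
      · exact hx2 ht1
      · rw [Set.mem_singleton_iff] at h
        exact hx2 (h ▸ ht2)
    have h2 : ({t1, t2} : Set V).ncard = 2 := Set.ncard_pair hne
    have hd1 : (G.neighborSet ↑v \ {t1, t2}).ncard = degree' G ↑v - 2 := by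
      rw [Set.ncard_diff hpair (Set.toFinite _), h2]
      rfl
    have hd2 : 2 ≤ degree' G ↑v := by
      have h := Set.ncard_le_ncard hpair (Set.toFinite _)
      rwa [h2] at h
    have hdle : degree' (G.induce S) v ≤ degree' G ↑v - 2 := by
      rw [hdeg, ← hd1]
      exact Set.ncard_le_ncard hsub2 (Set.toFinite _)
    have hom : omegaAt (G.induce S) v ≤ omegaAt G ↑v := by
      apply csSup_le'
      rintro n ⟨s, hs, hvs⟩
      exact le_csSup (bddAbove_omegaSet G ↑v)
        ⟨s.image Subtype.val, isNClique_image hs, Finset.mem_image_of_mem _ hvs⟩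
    unfold gammaLocalAt
    omega
  · -- twin
    simp only [closedNbhdOn, Set.univ_inter] at heq
    exact main t ht (heq ▸ subset_rfl)
  · -- trumped
    simp only [closedNbhdOn, Set.univ_inter] at hsub
    exact main t ht hsub.subset

end Paper
end
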